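/- arXiv:2308.15694 — 11 statements merged into one kernel-verified Lean document; each statement's English description precedes it below -/
import Mathlib

section
/- Let H be a finite dihedral group and let R_1, …, R_t (t ≥ 1) be subgroups of H such that |R_1| = |R_2| = ⋯ = |R_t| ≥ 3. Then the intersection R_1 ∩ ⋯ ∩ R_t contains a nontrivial normal subgroup of H. -/
namespace DihedralAux

open DihedralGroup Subgroup

variable {n : ℕ}

/-- The rotation subgroup of the dihedral group. -/
def C (n : ℕ) : Subgroup (DihedralGroup n) where
  carrier := {x | ∃ i, x = DihedralGroup.r i}
  one_mem' := ⟨0, rfl⟩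
  mul_mem' := by rintro _ _ ⟨i, rfl⟩ ⟨j, rfl⟩; exact ⟨i + j, rfl⟩
  inv_mem' := by rintro _ ⟨i, rfl⟩; exact ⟨-i, rfl⟩

lemma mem_C {x : DihedralGroup n} : x ∈ C n ↔ ∃ i, x = DihedralGroup.r i := Iff.rfl

lemma r_mem_C (i : ZMod n) : DihedralGroup.r i ∈ C n := ⟨i, rfl⟩

lemma inv_r (i : ZMod n) : (DihedralGroup.r i)⁻¹ = DihedralGroup.r (-i) := rfl

lemma inv_sr (i : ZMod n) : (DihedralGroup.sr i)⁻¹ = DihedralGroup.sr i := rfl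

lemma card_C [NeZero n] : Nat.card (C n) = n := by
  have : Function.Bijective (fun i : ZMod n => (⟨DihedralGroup.r i, r_mem_C i⟩ : C n)) := by
    constructor
    · intro a b hab
      simpa using congrArg Subtype.val hab
    · rintro ⟨x, i, rfl⟩
      exact ⟨i, rfl⟩
  rw [← Nat.card_eq_of_bijective _ this, Nat.card_zmod]

lemma normal_of_le_C {N : Subgroup (DihedralGroup n)} (h : N ≤ C n) : N.Normal := by
  constructor
  intro x hx g
  obtain ⟨i, rfl⟩ := h hx
  cases g with
  | r j =>
      rw [show DihedralGroup.r j * DihedralGroup.r i = DihedralGroup.r i * DihedralGroup.r j by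
        simp [add_comm], mul_inv_cancel_right]
      exact hx
  | sr j =>
      rw [inv_sr]
      have : DihedralGroup.sr j * DihedralGroup.r i * DihedralGroup.sr j
          = (DihedralGroup.r i)⁻¹ := by
        rw [sr_mul_r, sr_mul_sr, inv_r]
        ring_nf
      rw [this]
      exact inv_mem hx

instance [NeZero n] : IsCyclic (C n) := by
  refine ⟨⟨⟨DihedralGroup.r 1, r_mem_C 1⟩, ?_⟩⟩
  rintro ⟨x, i, rfl⟩
  refine ⟨(i.val : ℤ), ?_⟩
  ext
  push_cast
  rw [zpow_natCast, r_one_pow, ZMod.natCast_val, ZMod.cast_id]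

/-- The parity homomorphism. -/
def π : DihedralGroup n →* Multiplicative (ZMod 2) where
  toFun x := match x with
    | .r _ => 1
    | .sr _ => Multiplicative.ofAdd 1
  map_one' := rfl
  map_mul' := by rintro (a | a) (b | b) <;> simp only [r_mul_r, r_mul_sr, sr_mul_r, sr_mul_sr] <;> rfl

lemma ker_π : (π (n := n)).ker = C n := by
  ext x
  cases x with
  | r i => simp [MonoidHom.mem_ker, π, mem_C]; rfl
  | sr i =>
      simp only [MonoidHom.mem_ker, π, mem_C, MonoidHom.coe_mk, OneHom.coe_mk]
      constructor
      · intro h; exact absurd h (by change ¬ (Multiplicative.ofAdd (1 : ZMod 2) = 1); decide)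
      · rintro ⟨j, h⟩; cases h

/-- The rotation part of a subgroup has index 1 or 2. -/
lemma exists_index (R : Subgroup (DihedralGroup n)) [NeZero n] :
    ∃ e, e ∣ 2 ∧ e * Nat.card ↥(R ⊓ C n) = Nat.card R := by
  set f := (π (n := n)).comp R.subtype with hf
  refine ⟨Nat.card f.range, ?_, ?_⟩
  · have := Subgroup.card_subgroup_dvd_card f.range
    simpa [Nat.card_eq_fintype_card] using this
  · have h1 : Nat.card R = Nat.card (R ⧸ f.ker) * Nat.card f.ker :=
      Subgroup.card_eq_card_quotient_mul_card_subgroup f.ker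
    have h2 : Nat.card (R ⧸ f.ker) = Nat.card f.range :=
      Nat.card_congr (QuotientGroup.quotientKerEquivRange f).toEquiv
    have h3 : f.ker = (R ⊓ C n).subgroupOf R := by
      rw [Subgroup.inf_subgroupOf_left, ← ker_π]
      rfl
    have h4 : Nat.card f.ker = Nat.card ↥(R ⊓ C n) := by
      rw [h3]
      exact Nat.card_congr (Subgroup.subgroupOfEquivOfLe inf_le_left).toEquiv
    rw [h1, h2, h4]

lemma mem_of_pow_eq_one [NeZero n] (H : Subgroup (DihedralGroup n)) {x : DihedralGroup n}
    (hx : x ∈ C n) (hpow : x ^ Nat.card ↥(H ⊓ C n) = 1) : x ∈ H := by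
  classical
  set d := Nat.card ↥(H ⊓ C n) with hd
  have hdpos : 0 < d := Nat.card_pos
  set Q : Subgroup (C n) := (H ⊓ C n).subgroupOf (C n) with hQ
  have hQcard : Nat.card Q = d := by
    rw [hQ, hd]
    exact Nat.card_congr (Subgroup.subgroupOfEquivOfLe inf_le_right).toEquiv
  set F : Finset (C n) := Finset.univ.filter (fun a : C n => a ^ d = 1) with hF
  have hle : F.card ≤ d := IsCyclic.card_pow_eq_one_le hdpos
  have hsub : (Q : Set (C n)).toFinset ⊆ F := by
    intro a ha
    rw [Set.mem_toFinset] at ha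
    simp only [hF, Finset.mem_filter, Finset.mem_univ, true_and]
    have : (⟨a, ha⟩ : Q) ^ Nat.card Q = 1 := pow_card_eq_one'
    rw [hQcard] at this
    simpa using congrArg Subtype.val this
  have hcard' : (Q : Set (C n)).toFinset.card = d := by
    rw [Set.toFinset_card, ← Nat.card_eq_fintype_card, SetLike.coe_sort_coe, hQcard]
  have heq : (Q : Set (C n)).toFinset = F :=
    Finset.eq_of_subset_of_card_le hsub (by rw [hcard']; exact hle)
  have hyF : (⟨x, hx⟩ : C n) ∈ F := by
    simp only [hF, Finset.mem_filter, Finset.mem_univ, true_and]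
    ext
    simpa using hpow
  rw [← heq, Set.mem_toFinset] at hyF
  have : x ∈ H ⊓ C n := hyF
  exact this.1

end DihedralAux

/-- If `R 0, …, R (t-1)` (with `t ≥ 1`) are subgroups of a finite dihedral group
`DihedralGroup n`, all of the same order, and that common order is at least `3`,
then their intersection contains a nontrivial normal subgroup of `DihedralGroup n`. -/
theorem dihedral_subgroups_common_order_inter_contains_normal
    (n t : ℕ) (hn : 0 < n) (ht : 1 ≤ t)
    (R : Fin t → Subgroup (DihedralGroup n))
    (hcard : ∀ i j : Fin t, Nat.card (R i) = Nat.card (R j))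
    (h3 : ∀ i : Fin t, 3 ≤ Nat.card (R i)) :
    ∃ N : Subgroup (DihedralGroup n), N.Normal ∧ N ≠ ⊥ ∧ ∀ i : Fin t, N ≤ R i := by
  haveI : NeZero n := ⟨hn.ne'⟩
  set i0 : Fin t := ⟨0, ht⟩ with hi0
  set m : ℕ := Nat.card (R i0) with hm
  have hm3 : 3 ≤ m := h3 i0
  set ℓ : ℕ := if 2 ∣ m then m / 2 else m with hℓ
  have hℓ2 : 2 ≤ ℓ := by
    rw [hℓ]; split_ifs with h <;> omega
  have hℓm : ℓ ∣ m := by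
    rw [hℓ]; split_ifs with h
    · exact Nat.div_dvd_of_dvd h
    · exact dvd_rfl
  -- ℓ divides the rotation part of each R i
  have key : ∀ i, ℓ ∣ Nat.card ↥(R i ⊓ DihedralAux.C n) := by
    intro i
    obtain ⟨e, he2, hed⟩ := DihedralAux.exists_index (R i)
    rw [hcard i i0, ← hm] at hed
    have he : e = 1 ∨ e = 2 := (Nat.dvd_prime Nat.prime_two).mp he2
    rw [hℓ]
    split_ifs with h
    · rcases he with rfl | rfl
      · rw [one_mul] at hed; rw [hed]; exact Nat.div_dvd_of_dvd h
      · exact ⟨1, by omega⟩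
    · rcases he with rfl | rfl
      · exact ⟨1, by omega⟩
      · exact absurd ⟨Nat.card ↥(R i ⊓ DihedralAux.C n), hed.symm⟩ h
  have hdn : ∀ i, Nat.card ↥(R i ⊓ DihedralAux.C n) ∣ n := by
    intro i
    have h1 : Nat.card ↥(R i ⊓ DihedralAux.C n) ∣ Nat.card (DihedralAux.C n) :=
      Subgroup.card_dvd_of_le inf_le_right
    rwa [DihedralAux.card_C] at h1
  have hℓn : ℓ ∣ n := (key i0).trans (hdn i0)
  -- the element
  set x : DihedralGroup n := DihedralGroup.r ((n / ℓ : ℕ) : ZMod n) with hx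
  have hxC : x ∈ DihedralAux.C n := DihedralAux.r_mem_C _
  have hxpow : x ^ ℓ = 1 := by
    rw [hx, ← DihedralGroup.r_one_pow, ← pow_mul, Nat.div_mul_cancel hℓn,
      DihedralGroup.r_one_pow_n]
  have hxR : ∀ i, x ∈ R i := by
    intro i
    apply DihedralAux.mem_of_pow_eq_one (R i) hxC
    obtain ⟨c, hc⟩ := key i
    rw [hc, pow_mul, hxpow, one_pow]
  have hxne : x ≠ 1 := by
    rw [hx, DihedralGroup.one_def]
    intro h
    have h0 : ((n / ℓ : ℕ) : ZMod n) = 0 := by injection h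
    rw [ZMod.natCast_eq_zero_iff] at h0
    have h1 : 0 < n / ℓ := Nat.div_pos (Nat.le_of_dvd hn hℓn) (by omega)
    have h2 : n / ℓ < n := Nat.div_lt_self hn (by omega)
    exact absurd (Nat.le_of_dvd h1 h0) (by omega)
  refine ⟨Subgroup.zpowers x, ?_, ?_, ?_⟩
  · exact DihedralAux.normal_of_le_C (Subgroup.zpowers_le.mpr hxC)
  · simpa [Subgroup.zpowers_eq_bot] using hxne
  · intro i
    exact Subgroup.zpowers_le.mpr (hxR i)
end

section
/- Let H be a finite dihedral group of order 2n acting faithfully and transitively on a nonempty finite set Δ. Then every point stabilizer in H has order at most 2 (equivalently, |Δ| ≥ n). -/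
/-- If the dihedral group of order `2n` acts faithfully and transitively on a nonempty
finite set `Δ`, then every point stabilizer has order at most `2`
(equivalently, `|Δ| ≥ n`). -/
theorem dihedral_faithful_transitive_stabilizer_le_two
    (n : ℕ) (hn : 0 < n) (Δ : Type*) [Fintype Δ] [Nonempty Δ]
    [MulAction (DihedralGroup n) Δ]
    (hfaithful : ∀ g : DihedralGroup n, (∀ δ : Δ, g • δ = δ) → g = 1)
    (htrans : ∀ δ₁ δ₂ : Δ, ∃ g : DihedralGroup n, g • δ₁ = δ₂) :
    (∀ δ : Δ, Nat.card (MulAction.stabilizer (DihedralGroup n) δ) ≤ 2) ∧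
      n ≤ Fintype.card Δ := by
  haveI : NeZero n := ⟨hn.ne'⟩
  -- any nontrivial rotation fixing a point must be trivial
  have hrot : ∀ (a : ZMod n) (δ : Δ), (DihedralGroup.r a) • δ = δ → a = 0 := by
    intro a δ hfix
    have hall : ∀ δ' : Δ, (DihedralGroup.r a) • δ' = δ' := by
      intro δ'
      obtain ⟨g, hg⟩ := htrans δ δ'
      have hconj : g⁻¹ * DihedralGroup.r a * g = DihedralGroup.r a ∨
          g⁻¹ * DihedralGroup.r a * g = DihedralGroup.r (-a) := by
        cases g with
        | r b =>
            left
            rw [mul_assoc, inv_mul_eq_iff_eq_mul]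
            simp only [DihedralGroup.r_mul_r]
            ring_nf
        | sr b =>
            right
            rw [mul_assoc, inv_mul_eq_iff_eq_mul]
            simp only [DihedralGroup.r_mul_sr, DihedralGroup.sr_mul_r]
            ring_nf
      have hfix' : (DihedralGroup.r (-a)) • δ = δ := by
        conv_lhs => rw [← hfix, ← mul_smul, DihedralGroup.r_mul_r, neg_add_cancel,
          ← DihedralGroup.one_def, one_smul]
      have key : (g⁻¹ * DihedralGroup.r a * g) • δ = δ := by
        rcases hconj with h | h <;> rw [h] <;> assumption
      calc DihedralGroup.r a • δ' = DihedralGroup.r a • g • δ := by rw [hg]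
        _ = g • (g⁻¹ * DihedralGroup.r a * g) • δ := by
              simp [mul_smul]
        _ = g • δ := by rw [key]
        _ = δ' := hg
    have := hfaithful _ hall
    exact DihedralGroup.r.inj (this.trans DihedralGroup.one_def)
  have hstab : ∀ δ : Δ, Nat.card (MulAction.stabilizer (DihedralGroup n) δ) ≤ 2 := by
    intro δ
    have hf : Function.Injective
        (fun x : MulAction.stabilizer (DihedralGroup n) δ =>
          (match (x : DihedralGroup n) with
            | DihedralGroup.r _ => (0 : Fin 2)
            | DihedralGroup.sr _ => 1)) := by
      rintro ⟨x, hx⟩ ⟨y, hy⟩ hxy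
      simp only [MulAction.mem_stabilizer_iff] at hx hy
      cases x with
      | r a =>
        cases y with
        | r b =>
            have ha := hrot a δ hx
            have hb := hrot b δ hy
            subst ha; subst hb; rfl
        | sr b => simp at hxy
      | sr a =>
        cases y with
        | r b => simp at hxy
        | sr b =>
            have hprod : (DihedralGroup.sr a * DihedralGroup.sr b) • δ = δ := by
              rw [mul_smul, hy, hx]
            rw [DihedralGroup.sr_mul_sr] at hprod
            have := hrot _ _ hprod
            have hab : a = b := by linear_combination -this
            subst hab; rfl
    calc Nat.card (MulAction.stabilizer (DihedralGroup n) δ)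
        ≤ Nat.card (Fin 2) := Nat.card_le_card_of_injective _ hf
      _ = 2 := by simp
  refine ⟨hstab, ?_⟩
  obtain ⟨δ⟩ := (inferInstance : Nonempty Δ)
  have horb : MulAction.orbit (DihedralGroup n) δ = Set.univ := by
    ext δ'
    simp only [Set.mem_univ, iff_true, MulAction.mem_orbit_iff]
    exact htrans δ δ'
  classical
  have hos := MulAction.card_orbit_mul_card_stabilizer_eq_card_group (DihedralGroup n) δ
  rw [DihedralGroup.card] at hos
  have hcardorb : Fintype.card (MulAction.orbit (DihedralGroup n) δ) = Fintype.card Δ := by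
    rw [Fintype.card_congr ((Equiv.setCongr horb).trans (Equiv.Set.univ Δ))]
  rw [hcardorb] at hos
  have hstabδ := hstab δ
  rw [Nat.card_eq_fintype_card] at hstabδ
  nlinarith [Fintype.card_pos_iff.mpr (inferInstance : Nonempty Δ)]
end

section
/- Let F be a finite field with q elements and d ≥ 1 an integer. If x and y are elements of GL_d(F) both of order q^d − 1, then the cyclic subgroups ⟨x⟩ and ⟨y⟩ are conjugate in GL_d(F); that is, there exists g ∈ GL_d(F) with g⁻¹⟨x⟩g = ⟨y⟩. -/
open Polynomial

set_option maxHeartbeats 1000000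
set_option synthInstance.maxHeartbeats 400000

private lemma adjoin_card_le' {F : Type*} [Field F] [Fintype F] {d : ℕ} (hd : 1 ≤ d)
    (m : Matrix (Fin d) (Fin d) F) :
    Nat.card (Algebra.adjoin F {m}) ≤ Fintype.card F ^ d := by
  classical
  have hmem : ∀ c : Fin d → F, (∑ i : Fin d, c i • m ^ (i : ℕ)) ∈ Algebra.adjoin F {m} := by
    intro c
    exact Subalgebra.sum_mem _ fun i _ => Subalgebra.smul_mem _
      (Subalgebra.pow_mem _ (Algebra.self_mem_adjoin_singleton F m) _) _
  have hsurj : Function.Surjective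
      (fun c : Fin d → F => (⟨∑ i : Fin d, c i • m ^ (i : ℕ), hmem c⟩ :
        Algebra.adjoin F {m})) := by
    rintro ⟨a, ha⟩
    rw [Algebra.adjoin_singleton_eq_range_aeval] at ha
    obtain ⟨p, hp⟩ := ha
    have hch : m.charpoly ≠ 1 := by
      intro h
      have h1 := m.charpoly_natDegree_eq_dim
      rw [h, Polynomial.natDegree_one, Fintype.card_fin] at h1
      omega
    have hdeg : (p %ₘ m.charpoly).natDegree < d := by
      have := Polynomial.natDegree_modByMonic_lt p m.charpoly_monic hch
      rwa [m.charpoly_natDegree_eq_dim, Fintype.card_fin] at this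
    refine ⟨fun i => (p %ₘ m.charpoly).coeff i, ?_⟩
    ext1
    simp only
    rw [Fin.sum_univ_eq_sum_range (fun i => (p %ₘ m.charpoly).coeff i • m ^ i)]
    rw [← Polynomial.aeval_eq_sum_range' hdeg, ← Matrix.aeval_eq_aeval_mod_charpoly]; exact hp
  calc Nat.card (Algebra.adjoin F {m}) ≤ Nat.card (Fin d → F) :=
        Nat.card_le_card_of_surjective _ hsurj
    _ = Fintype.card F ^ d := by simp [Nat.card_eq_fintype_card]

private lemma singer_adjoin {F : Type*} [Field F] [Fintype F] {d : ℕ} (hd : 1 ≤ d)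
    (x : GL (Fin d) F) (hx : orderOf x = Fintype.card F ^ d - 1) :
    ∃ u : (Algebra.adjoin F {(x : Matrix (Fin d) (Fin d) F)})ˣ,
      (u : Algebra.adjoin F {(x : Matrix (Fin d) (Fin d) F)}) =
        ⟨(x : Matrix (Fin d) (Fin d) F),
          Algebra.self_mem_adjoin_singleton F _⟩ ∧
      orderOf u = Fintype.card F ^ d - 1 ∧
      Nat.card (Algebra.adjoin F {(x : Matrix (Fin d) (Fin d) F)}) = Fintype.card F ^ d ∧
      ∀ k : (Algebra.adjoin F {(x : Matrix (Fin d) (Fin d) F)}), k ≠ 0 → IsUnit k := by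
  classical
  set q := Fintype.card F with hqdef
  have hq : 2 ≤ q := Fintype.one_lt_card
  have hq2 : 2 ≤ q ^ d := le_trans hq (Nat.le_self_pow (by omega) q)
  set n := q ^ d - 1 with hndef
  have hn : n ≠ 0 := by omega
  set K := Algebra.adjoin F {(x : Matrix (Fin d) (Fin d) F)} with hKdef
  set uK : K := ⟨(x : Matrix (Fin d) (Fin d) F),
    Algebra.self_mem_adjoin_singleton F _⟩ with huKdef
  -- x^n = 1 as a matrix
  have hx1 : (x : Matrix (Fin d) (Fin d) F) ^ n = 1 := by
    have h := pow_orderOf_eq_one x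
    rw [hx] at h
    calc (x : Matrix (Fin d) (Fin d) F) ^ n = ((x ^ n : GL (Fin d) F) : _) :=
        (Units.val_pow_eq_pow_val x n).symm
    _ = 1 := by rw [h]; rfl
  have huK1 : uK ^ n = 1 := by
    apply Subtype.ext
    rw [SubmonoidClass.coe_pow]
    exact hx1
  have hu : IsUnit uK := IsUnit.of_pow_eq_one huK1 hn
  refine ⟨hu.unit, hu.unit_spec, ?_⟩
  haveI : Nonempty (Fin d) := ⟨⟨0, hd⟩⟩
  haveI hMnontriv : Nontrivial (Matrix (Fin d) (Fin d) F) := Matrix.nonempty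
  haveI hKnontriv : Nontrivial K := nontrivial_of_ne 0 1 (fun h01 => by
    have := congrArg Subtype.val h01
    simp only [ZeroMemClass.coe_zero, OneMemClass.coe_one] at this
    exact zero_ne_one (α := Matrix (Fin d) (Fin d) F) this)
  haveI hfinK : Finite K := Subtype.finite
  haveI : Nonempty Kˣ := ⟨1⟩
  -- order of the unit
  have horder : orderOf hu.unit = n := by
    have h1 : orderOf ((hu.unit : Kˣ) : K) = orderOf hu.unit := orderOf_units
    rw [hu.unit_spec] at h1
    have h2 : orderOf uK = orderOf (x : Matrix (Fin d) (Fin d) F) :=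
      (orderOf_injective (K.val.toRingHom.toMonoidHom) (fun a b h => Subtype.ext h) uK).symm
    have h3 : orderOf (x : Matrix (Fin d) (Fin d) F) = orderOf x := orderOf_units
    rw [← h1, h2, h3, hx]
  refine ⟨horder, ?_⟩
  -- cardinality bounds
  have hcardle : Nat.card K ≤ q ^ d := adjoin_card_le' hd _
  have hdvd : orderOf hu.unit ∣ Nat.card Kˣ := orderOf_dvd_natCard _
  have hposU : 0 < Nat.card Kˣ := Nat.card_pos
  have hnle : n ≤ Nat.card Kˣ := horder ▸ Nat.le_of_dvd hposU hdvd
  -- units inject into nonzero elements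
  have hunit_ne : ∀ w : Kˣ, (w : K) ≠ 0 := by
    intro w hw
    have : (w : K) * (w⁻¹ : Kˣ) = 1 := w.mul_inv
    rw [hw, zero_mul] at this
    exact zero_ne_one this
  let ψ : Kˣ → {k : K // k ≠ 0} := fun w => ⟨(w : K), hunit_ne w⟩
  have hψinj : Function.Injective ψ := by
    intro a b h
    exact Units.ext (congrArg Subtype.val h)
  have hcard_ne : Nat.card {k : K // k ≠ 0} = Nat.card K - 1 := by
    letI := Fintype.ofFinite K
    rw [Nat.card_eq_fintype_card, Nat.card_eq_fintype_card]
    classical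
    have := Set.card_ne_eq (0 : K)
    convert this using 2
    rfl
  have hUle : Nat.card Kˣ ≤ Nat.card K - 1 :=
    hcard_ne ▸ Nat.card_le_card_of_injective ψ hψinj
  have hKpos : 0 < Nat.card K := Nat.card_pos
  have hcardK : Nat.card K = q ^ d := by omega
  refine ⟨hcardK, ?_⟩
  -- every nonzero element is a unit
  have hUcard : Nat.card Kˣ = Nat.card {k : K // k ≠ 0} := by omega
  have hψbij : Function.Bijective ψ :=
    hψinj.bijective_of_nat_card_le (le_of_eq hUcard.symm)
  intro k hk
  obtain ⟨w, hw⟩ := hψbij.2 ⟨k, hk⟩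
  have : (w : K) = k := congrArg Subtype.val hw
  exact this ▸ w.isUnit

private noncomputable def finiteFieldAlgEquiv {F K K' : Type*} [Field F] [Field K] [Field K']
    [Algebra F K] [Algebra F K'] [Fintype K] [Fintype K']
    (h : Fintype.card K = Fintype.card K') : K ≃ₐ[F] K' := by
  haveI : IsSplittingField F K' ((X : F[X]) ^ Fintype.card K - X) :=
    h ▸ FiniteField.isSplittingField_sub K' F
  exact (IsSplittingField.algEquiv K ((X : F[X]) ^ Fintype.card K - X)).trans
    (IsSplittingField.algEquiv K' ((X : F[X]) ^ Fintype.card K - X)).symm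

/-- Any two Singer subgroups of `GL_d(F)` (cyclic subgroups generated by elements of
order `q^d - 1`, where `q = |F|`) are conjugate: there is `g` with `g⁻¹⟨x⟩g = ⟨y⟩`. -/
theorem singer_subgroups_conjugate
    (F : Type*) [Field F] [Fintype F] (d : ℕ) (hd : 1 ≤ d)
    (x y : Matrix.GeneralLinearGroup (Fin d) F)
    (hx : orderOf x = Fintype.card F ^ d - 1)
    (hy : orderOf y = Fintype.card F ^ d - 1) :
    ∃ g : Matrix.GeneralLinearGroup (Fin d) F,
      Subgroup.map (MulAut.conj g⁻¹).toMonoidHom (Subgroup.zpowers x) =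
        Subgroup.zpowers y := by
  classical
  haveI : Nonempty (Fin d) := ⟨⟨0, hd⟩⟩
  set q := Fintype.card F with hqdef
  have hq : 2 ≤ q := Fintype.one_lt_card
  have hq2 : 2 ≤ q ^ d := le_trans hq (Nat.le_self_pow (by omega) q)
  set n := q ^ d - 1 with hndef
  set M := Matrix (Fin d) (Fin d) F with hMdef
  set K := Algebra.adjoin F {(x : M)} with hKdef
  set K' := Algebra.adjoin F {(y : M)} with hK'def
  obtain ⟨u, huspec, huord, hucard, hufield⟩ := singer_adjoin hd x hx
  obtain ⟨u', hu'spec, hu'ord, hu'card, hu'field⟩ := singer_adjoin hd y hy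
  -- commutative ring structures
  letI cK : CommRing K := Algebra.adjoinCommRingOfComm F (by
    rintro a ha b hb
    rw [Set.mem_singleton_iff] at ha hb; rw [ha, hb])
  letI cK' : CommRing K' := Algebra.adjoinCommRingOfComm F (by
    rintro a ha b hb
    rw [Set.mem_singleton_iff] at ha hb; rw [ha, hb])
  haveI : Nontrivial K := nontrivial_of_ne 0 1 (fun h01 => by
    have := congrArg Subtype.val h01
    simp only [ZeroMemClass.coe_zero, OneMemClass.coe_one] at this
    exact zero_ne_one (α := M) this)
  haveI : Nontrivial K' := nontrivial_of_ne 0 1 (fun h01 => by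
    have := congrArg Subtype.val h01
    simp only [ZeroMemClass.coe_zero, OneMemClass.coe_one] at this
    exact zero_ne_one (α := M) this)
  -- field structures
  letI fK : Field K := IsField.toField ⟨exists_pair_ne K, mul_comm,
    fun {a} ha => (hufield a ha).exists_right_inv⟩
  letI fK' : Field K' := IsField.toField ⟨exists_pair_ne K', mul_comm,
    fun {a} ha => (hu'field a ha).exists_right_inv⟩
  haveI finK : Fintype K := Fintype.ofFinite K
  haveI finK' : Fintype K' := Fintype.ofFinite K'
  have hcardK : Fintype.card K = q ^ d := by
    rw [← Nat.card_eq_fintype_card]; exact hucard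
  have hcardK' : Fintype.card K' = q ^ d := by
    rw [← Nat.card_eq_fintype_card]; exact hu'card
  -- the F-algebra isomorphism between the two fields
  let σ : K ≃ₐ[F] K' := finiteFieldAlgEquiv (hcardK.trans hcardK'.symm)
  -- the vector space V = Fin d → F
  set v : Fin d → F := fun _ => 1 with hvdef
  have hv : v ≠ 0 := fun h => one_ne_zero (congrFun h ⟨0, hd⟩)
  -- linear maps K → V and K' → V given by k ↦ k ⬝ v
  let A : K →ₗ[F] (Fin d → F) :=
    { toFun := fun k => Matrix.mulVec (k : M) v
      map_add' := fun a b => by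
        show Matrix.mulVec ((↑(a + b) : M)) v = _
        rw [AddMemClass.coe_add, Matrix.add_mulVec]
      map_smul' := fun c a => by
        show Matrix.mulVec ((↑(c • a) : M)) v = _
        rw [SetLike.val_smul, Matrix.smul_mulVec]; rfl }
  let B : K' →ₗ[F] (Fin d → F) :=
    { toFun := fun k => Matrix.mulVec (k : M) v
      map_add' := fun a b => by
        show Matrix.mulVec ((↑(a + b) : M)) v = _
        rw [AddMemClass.coe_add, Matrix.add_mulVec]
      map_smul' := fun c a => by
        show Matrix.mulVec ((↑(c • a) : M)) v = _
        rw [SetLike.val_smul, Matrix.smul_mulVec]; rfl }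
  have hAinj : Function.Injective A := by
    intro a b hab
    rw [← sub_eq_zero] at hab ⊢
    rw [← map_sub] at hab
    set k := a - b with hkdef
    by_contra hk
    obtain ⟨w, hw⟩ := hufield k hk
    have h1 : ((w⁻¹ : Kˣ) : K) * (w : K) = 1 := by exact_mod_cast w.inv_mul
    have h2 : (((w⁻¹ : Kˣ) : K) : M) * ((w : K) : M) = (1 : M) := by
      rw [← MulMemClass.coe_mul, h1, OneMemClass.coe_one]
    have h3 : Matrix.mulVec ((w : K) : M) v = 0 := by rw [hw]; exact hab
    have : v = 0 := by
      calc v = Matrix.mulVec (1 : M) v := (Matrix.one_mulVec v).symm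
      _ = Matrix.mulVec ((((w⁻¹ : Kˣ) : K) : M) * ((w : K) : M)) v := by rw [h2]
      _ = Matrix.mulVec (((w⁻¹ : Kˣ) : K) : M) (Matrix.mulVec ((w : K) : M) v) :=
          (Matrix.mulVec_mulVec v _ _).symm
      _ = 0 := by rw [h3, Matrix.mulVec_zero]
    exact hv this
  have hBinj : Function.Injective B := by
    intro a b hab
    rw [← sub_eq_zero] at hab ⊢
    rw [← map_sub] at hab
    set k := a - b with hkdef
    by_contra hk
    obtain ⟨w, hw⟩ := hu'field k hk
    have h1 : ((w⁻¹ : K'ˣ) : K') * (w : K') = 1 := by exact_mod_cast w.inv_mul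
    have h2 : (((w⁻¹ : K'ˣ) : K') : M) * ((w : K') : M) = (1 : M) := by
      rw [← MulMemClass.coe_mul, h1, OneMemClass.coe_one]
    have h3 : Matrix.mulVec ((w : K') : M) v = 0 := by rw [hw]; exact hab
    have : v = 0 := by
      calc v = Matrix.mulVec (1 : M) v := (Matrix.one_mulVec v).symm
      _ = Matrix.mulVec ((((w⁻¹ : K'ˣ) : K') : M) * ((w : K') : M)) v := by rw [h2]
      _ = Matrix.mulVec (((w⁻¹ : K'ˣ) : K') : M) (Matrix.mulVec ((w : K') : M) v) :=
          (Matrix.mulVec_mulVec v _ _).symm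
      _ = 0 := by rw [h3, Matrix.mulVec_zero]
    exact hv this
  have hcardV : Nat.card (Fin d → F) = q ^ d := by
    simp [Nat.card_eq_fintype_card, hqdef]
  have hAbij : Function.Bijective A :=
    hAinj.bijective_of_nat_card_le (by rw [hcardV, hucard])
  have hBbij : Function.Bijective B :=
    hBinj.bijective_of_nat_card_le (by rw [hcardV, hu'card])
  let eA : K ≃ₗ[F] (Fin d → F) := LinearEquiv.ofBijective A hAbij
  let eB : K' ≃ₗ[F] (Fin d → F) := LinearEquiv.ofBijective B hBbij
  let g : (Fin d → F) ≃ₗ[F] (Fin d → F) :=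
    (eB.symm.trans σ.symm.toLinearEquiv).trans eA
  have hux : ((u : K) : M) = (x : M) := by rw [huspec]
  set z' : K' := σ (u : K) with hz'def
  have hgB : ∀ k' : K', g (B k') = eA (σ.symm k') := by
    intro k'
    show eA (σ.symm.toLinearEquiv (eB.symm (B k'))) = _
    have h0 : eB.symm (B k') = k' := by
      rw [show B k' = eB k' from rfl, LinearEquiv.symm_apply_apply]
    rw [h0]; rfl
  have hkey : ∀ w : Fin d → F,
      g (Matrix.mulVec ((z' : K') : M) w) = Matrix.mulVec (x : M) (g w) := by
    intro w
    obtain ⟨k', rfl⟩ := eB.surjective w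
    have h1 : Matrix.mulVec ((z' : K') : M) (eB k') = B (z' * k') := by
      show Matrix.mulVec _ (Matrix.mulVec ((k' : K') : M) v) = _
      rw [Matrix.mulVec_mulVec, ← MulMemClass.coe_mul]; rfl
    have h2 : (eB k' : Fin d → F) = B k' := rfl
    calc g (Matrix.mulVec ((z' : K') : M) (eB k'))
        = g (B (z' * k')) := by rw [← h1]
      _ = eA (σ.symm (z' * k')) := hgB _
      _ = eA ((u : K) * σ.symm k') := by rw [map_mul, hz'def, σ.symm_apply_apply]
      _ = Matrix.mulVec (x : M) (eA (σ.symm k')) := by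
          show Matrix.mulVec ((((u : K) * σ.symm k') : K) : M) v = _
          rw [MulMemClass.coe_mul, ← Matrix.mulVec_mulVec, hux]; rfl
      _ = Matrix.mulVec (x : M) (g (eB k')) := by rw [h2, hgB]
  -- build the invertible matrix G from g
  have hcompid : ∀ (e : (Fin d → F) ≃ₗ[F] (Fin d → F)),
      LinearMap.toMatrix' (e : (Fin d → F) →ₗ[F] (Fin d → F)) *
        LinearMap.toMatrix' (e.symm : (Fin d → F) →ₗ[F] (Fin d → F)) = 1 := by
    intro e
    rw [← LinearMap.toMatrix'_comp]
    have : (e : (Fin d → F) →ₗ[F] (Fin d → F)).comp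
        (e.symm : (Fin d → F) →ₗ[F] (Fin d → F)) = LinearMap.id := by
      ext w; simp
    rw [this, LinearMap.toMatrix'_id]
  set G : Matrix.GeneralLinearGroup (Fin d) F :=
    ⟨LinearMap.toMatrix' (g : (Fin d → F) →ₗ[F] (Fin d → F)),
     LinearMap.toMatrix' (g.symm : (Fin d → F) →ₗ[F] (Fin d → F)),
     hcompid g, by rw [show g = g.symm.symm from rfl] at *; exact hcompid g.symm⟩ with hGdef
  have hmulVecG : ∀ w : Fin d → F, Matrix.mulVec (G : M) w = g w := by
    intro w
    show Matrix.mulVec (LinearMap.toMatrix' (g : (Fin d → F) →ₗ[F] (Fin d → F))) w = _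
    rw [← Matrix.toLin'_apply, Matrix.toLin'_toMatrix']; rfl
  have hmat : ∀ P Q : M, (∀ w, Matrix.mulVec P w = Matrix.mulVec Q w) → P = Q := by
    intro P Q h
    exact Matrix.toLin'.injective (LinearMap.ext (fun w => by
      rw [Matrix.toLin'_apply, Matrix.toLin'_apply, h w]))
  have hGz : (G : M) * ((z' : K') : M) = (x : M) * (G : M) := by
    apply hmat
    intro w
    rw [← Matrix.mulVec_mulVec, ← Matrix.mulVec_mulVec, hmulVecG, hmulVecG, hkey]
  -- monoid homs into the matrix units
  let jmh : K' →* M :=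
    { toFun := Subtype.val, map_one' := rfl, map_mul' := fun a b => rfl }
  let σmh : K →* K' := { toFun := σ, map_one' := map_one σ, map_mul' := map_mul σ }
  let zu : K'ˣ := Units.map σmh u
  let jGL : K'ˣ →* Matrix.GeneralLinearGroup (Fin d) F := Units.map jmh
  have hzuord : orderOf zu = Fintype.card F ^ d - 1 := by
    rw [← huord]
    exact orderOf_injective (Units.map σmh) (Units.map_injective σ.injective) u
  have hcardK'units : Nat.card K'ˣ = Fintype.card F ^ d - 1 := by
    rw [Nat.card_units, hu'card]
  have htopzu : Subgroup.zpowers zu = ⊤ :=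
    Subgroup.eq_top_of_card_eq _ (by rw [Nat.card_zpowers, hzuord, hcardK'units])
  have htopu' : Subgroup.zpowers u' = ⊤ :=
    Subgroup.eq_top_of_card_eq _ (by rw [Nat.card_zpowers, hu'ord, hcardK'units])
  set zG : Matrix.GeneralLinearGroup (Fin d) F := jGL zu with hzGdef
  have hzGval : (zG : M) = ((z' : K') : M) := rfl
  have hgx : x * G = G * zG := by
    apply Units.ext
    show (x : M) * (G : M) = (G : M) * (zG : M)
    rw [hzGval, ← hGz]
  have hc : G⁻¹ * x * G = zG := by
    rw [mul_assoc, hgx, ← mul_assoc, inv_mul_cancel, one_mul]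
  refine ⟨G, ?_⟩
  rw [MonoidHom.map_zpowers]
  have hconj : (MulAut.conj G⁻¹).toMonoidHom x = G⁻¹ * x * G := by
    show G⁻¹ * x * G⁻¹⁻¹ = G⁻¹ * x * G
    rw [inv_inv]
  rw [hconj, hc]
  have hyj : y = jGL u' := Units.ext (congrArg Subtype.val hu'spec).symm
  calc Subgroup.zpowers zG = Subgroup.map jGL (Subgroup.zpowers zu) :=
        (MonoidHom.map_zpowers _ _).symm
    _ = Subgroup.map jGL (Subgroup.zpowers u') := by rw [htopzu, htopu']
    _ = Subgroup.zpowers y := by rw [MonoidHom.map_zpowers, ← hyj]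
end

section
/- Let F be a finite field, V a nonzero finite-dimensional vector space over F, and R a subgroup of GL(V) acting irreducibly on V, i.e., the only R-invariant F-subspaces of V are 0 and V. Then the centralizer of R in GL(V) is a cyclic group. -/
/-!
Schur's lemma: an endomorphism commuting with an irreducible set of operators has an invariant
kernel, so it is zero or injective. Hence the centralizer algebra `D` of `R` in `End(V)` has no
zero divisors; being finite, it is a field. The centralizer of `R` in `GL(V)` embeds into the
multiplicative group of `D`, and finite subgroups of the multiplicative group of a field are
cyclic.
-/

namespace Subalgebra

section Schur

variable {K M : Type*} [CommRing K] [AddCommGroup M] [Module K M] {S : Set (Module.End K M)}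

theorem ker_eq_bot_of_mem_centralizer
    (hS : ∀ W : Submodule K M, (∀ s ∈ S, ∀ v ∈ W, s v ∈ W) → W = ⊥ ∨ W = ⊤)
    {f : Module.End K M} (hf : f ∈ centralizer K S) (hf0 : f ≠ 0) :
    LinearMap.ker f = ⊥ := by
  refine (hS _ fun s hs v hv => ?_).resolve_right (mt LinearMap.ker_eq_top.mp hf0)
  have hcomm : s * f = f * s := (mem_centralizer_iff K).mp hf s hs
  rw [LinearMap.mem_ker] at hv ⊢
  rw [← Module.End.mul_apply, ← hcomm, Module.End.mul_apply, hv, map_zero]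

theorem noZeroDivisors_centralizer
    (hS : ∀ W : Submodule K M, (∀ s ∈ S, ∀ v ∈ W, s v ∈ W) → W = ⊥ ∨ W = ⊤) :
    NoZeroDivisors (centralizer K S) where
  eq_zero_or_eq_zero_of_mul_eq_zero {a b} hab := by
    refine or_iff_not_imp_left.mpr fun ha => ?_
    have ha_inj : Function.Injective (a : Module.End K M) :=
      LinearMap.ker_eq_bot.mp (ker_eq_bot_of_mem_centralizer hS a.2 (by simpa using ha))
    ext v
    apply ha_inj
    simpa using congrArg (fun g : centralizer K S => (g : Module.End K M) v) hab

end Schur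

variable (K : Type*) {A : Type*} [CommSemiring K] [Semiring A] [Algebra K A]

def unitsCentralizerHom (S : Set Aˣ) :
    Subgroup.centralizer S →* centralizer K (Units.val '' S) where
  toFun g := ⟨g.1, (mem_centralizer_iff K).mpr <| by
    rintro _ ⟨s, hs, rfl⟩
    exact congrArg Units.val (g.2 s hs)⟩
  map_one' := rfl
  map_mul' _ _ := rfl

theorem unitsCentralizerHom_injective (S : Set Aˣ) :
    Function.Injective (unitsCentralizerHom K S) :=
  fun _ _ h => Subtype.ext (Units.ext (congrArg Subtype.val h))

end Subalgebra

open Subalgebra in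
/-- If `R` is a subgroup of `GL(V)` acting irreducibly on the nonzero finite-dimensional
vector space `V` over the finite field `F`, then the centralizer of `R` in `GL(V)`
is cyclic. -/
theorem centralizer_of_irreducible_isCyclic
    (F V : Type*) [Field F] [Finite F] [AddCommGroup V] [Module F V]
    [FiniteDimensional F V] [Nontrivial V]
    (R : Subgroup (LinearMap.GeneralLinearGroup F V))
    (hirr : ∀ W : Submodule F V,
      (∀ r ∈ R, ∀ v ∈ W, (r : V →ₗ[F] V) v ∈ W) → W = ⊥ ∨ W = ⊤) :
    IsCyclic (Subgroup.centralizer (R : Set (LinearMap.GeneralLinearGroup F V))) := by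
  set D := centralizer F (Units.val '' (R : Set (LinearMap.GeneralLinearGroup F V)))
  have : Finite (Module.End F V) := Module.finite_of_finite F
  have : NoZeroDivisors D :=
    noZeroDivisors_centralizer fun W hW => hirr W fun r hr => hW r ⟨r, hr, rfl⟩
  have : IsDomain D := NoZeroDivisors.to_isDomain D
  let : Field D := (Finite.isDomain_to_isField D).toField
  exact isCyclic_of_injective_ringHom _ (unitsCentralizerHom_injective F _)
end

section
/- Let p be a prime, e ≥ 1, q = p^e, and d ≥ 3 an integer. Let G be a finite group generated by elements x and y such that x has order p^{de} − 1, y has order de, ⟨x⟩ ∩ ⟨y⟩ = 1, and y⁻¹xy = x^p. Let Z = ⟨x^{(q^d−1)/(q−1)}⟩. If there exist g ∈ G and m ∈ {1, 2, 4} such that x^m · (g⁻¹ x^m g) ∈ Z, then d = 4, q = 3 and m = 4. -/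
private lemma aux_gcd_pow (p n a b : ℕ) (hp : 2 ≤ p) (ha : 0 < a)
    (hA : n ∣ p ^ a - 1) (hB : n ∣ p ^ b - 1) : n ∣ p ^ Nat.gcd a b - 1 := by
  have hpa : 2 ≤ p ^ a := by
    calc 2 = 2^1 := rfl
    _ ≤ p^1 := Nat.pow_le_pow_left hp 1
    _ ≤ p^a := Nat.pow_le_pow_right (by omega) ha
  have hn : n ≠ 0 := by
    rintro rfl
    have := Nat.eq_zero_of_zero_dvd hA
    omega
  haveI : NeZero n := ⟨hn⟩
  have key : ∀ c : ℕ, n ∣ p ^ c - 1 ↔ (p : ZMod n) ^ c = 1 := by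
    intro c
    have h1 : 1 ≤ p ^ c := Nat.one_le_pow _ _ (by omega)
    rw [← Nat.modEq_iff_dvd' h1]
    constructor
    · intro h
      have := (ZMod.natCast_eq_natCast_iff _ _ _).mpr h.symm
      push_cast at this
      simpa using this
    · intro h
      have : ((p ^ c : ℕ) : ZMod n) = ((1 : ℕ) : ZMod n) := by push_cast; simpa using h
      exact ((ZMod.natCast_eq_natCast_iff _ _ _).mp this).symm
  have h1 := (key a).mp hA
  have h2 := (key b).mp hB
  have hord := Nat.dvd_gcd (orderOf_dvd_iff_pow_eq_one.mpr h1) (orderOf_dvd_iff_pow_eq_one.mpr h2)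
  exact (key _).mpr (orderOf_dvd_iff_pow_eq_one.mp hord)

private lemma aux_div_gcd_dvd {a b c : ℕ} (ha : 0 < a) (hb : 0 < b) (h : a ∣ b * c) :
    a / Nat.gcd a b ∣ c := by
  have hg : 0 < Nat.gcd a b := Nat.gcd_pos_of_pos_left _ ha
  obtain ⟨t, ht⟩ := h
  have cop := Nat.coprime_div_gcd_div_gcd hg
  have hmul : (b / Nat.gcd a b) * c = (a / Nat.gcd a b) * t := by
    apply Nat.eq_of_mul_eq_mul_left hg
    calc Nat.gcd a b * (b / Nat.gcd a b * c) = (Nat.gcd a b * (b / Nat.gcd a b)) * c := by ring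
    _ = b * c := by rw [Nat.mul_div_cancel' (Nat.gcd_dvd_right a b)]
    _ = a * t := ht
    _ = (Nat.gcd a b * (a / Nat.gcd a b)) * t := by rw [Nat.mul_div_cancel' (Nat.gcd_dvd_left a b)]
    _ = Nat.gcd a b * (a / Nat.gcd a b * t) := by ring
  exact cop.dvd_of_dvd_mul_left ⟨t, hmul⟩

private lemma aux_dvd8 {A X : ℕ} (h1 : A ∣ 4 * (X + 1)) (h2 : A ∣ X - 1) (hX : 1 ≤ X) :
    A ∣ 8 := by
  have h3 : A ∣ 4 * (X - 1) := h2.mul_left 4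
  have h4 : 4 * (X + 1) = 4 * (X - 1) + 8 := by omega
  rw [h4] at h1
  exact (Nat.dvd_add_right h3).mp h1

set_option maxHeartbeats 2000000 in
private lemma key_numth (p e d m j : ℕ) (hp : p.Prime) (he : 1 ≤ e) (hd : 3 ≤ d)
    (hm : m = 1 ∨ m = 2 ∨ m = 4) (hj : j < d * e)
    (hdvd : ((p ^ e) ^ d - 1) / (p ^ e - 1) ∣ m * (p ^ j + 1)) :
    d = 4 ∧ p ^ e = 3 ∧ m = 4 := by
  have hp2 : 2 ≤ p := hp.two_le
  obtain ⟨d, rfl⟩ : ∃ d', d = d' + 3 := ⟨d - 3, by omega⟩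
  set q := p ^ e with hq
  clear_value q
  have hq2 : 2 ≤ q := by
    rw [hq]
    calc 2 = 2^1 := rfl
    _ ≤ p^1 := Nat.pow_le_pow_left hp2 1
    _ ≤ p^e := Nat.pow_le_pow_right (by omega) he
  set s := (q ^ (d + 3) - 1) / (q - 1) with hsdef
  clear_value s
  have hdq : (q - 1) ∣ (q ^ (d+3) - 1) := by
    have := Nat.sub_dvd_pow_sub_pow q 1 (d+3); simpa using this
  have hs : s * (q - 1) = q ^ (d+3) - 1 := by rw [hsdef]; exact Nat.div_mul_cancel hdq
  have hqd1 : 1 ≤ q ^ (d+3) := Nat.one_le_pow _ _ (by omega)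
  have h4q : 4 ≤ q ^ (d + 2) := by
    calc 4 = 2^2 := rfl
    _ ≤ q^2 := Nat.pow_le_pow_left hq2 2
    _ ≤ q^(d+2) := Nat.pow_le_pow_right (by omega) (by omega)
  have hQ : q ^ (d+2) * q = q ^ (d+3) := by rw [← pow_succ]
  have hsgt : q ^ (d + 2) < s := by
    by_contra hle
    push_neg at hle
    have h1 : s * (q-1) ≤ q^(d+2) * (q-1) := Nat.mul_le_mul_right _ hle
    have h2 : q^(d+2) * (q-1) + q^(d+2) = q ^ (d+3) := by
      have h3 : q^(d+2) * (q-1) + q^(d+2) * 1 = q^(d+2) * (q - 1 + 1) := by ring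
      have h4 : q - 1 + 1 = q := by omega
      rw [h4] at h3
      rw [mul_one] at h3
      rw [h3, hQ]
    omega
  have hm4 : m ∣ 4 := by rcases hm with rfl|rfl|rfl <;> norm_num
  have hdvd4 : s ∣ 4 * (p ^ j + 1) := hdvd.trans (mul_dvd_mul_right hm4 _)
  have hspos : 0 < s := by omega
  rcases Nat.eq_zero_or_pos j with hj0 | hjpos
  · -- j = 0 case
    exfalso
    subst hj0
    have h8 : s ∣ 8 := by simpa using hdvd4
    have hs8 : s ≤ 8 := Nat.le_of_dvd (by norm_num) h8
    have hql : q ≤ 2 := by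
      by_contra hq3
      push_neg at hq3
      have : 9 ≤ q^(d+2) := by
        calc 9 = 3^2 := rfl
        _ ≤ q^2 := Nat.pow_le_pow_left hq3 2
        _ ≤ q^(d+2) := Nat.pow_le_pow_right (by omega) (by omega)
      omega
    have hq2' : q = 2 := by omega
    rw [hq2'] at hs hsgt hQ
    have h2d : 2 ∣ 2^(d+3) := dvd_pow_self 2 (by omega)
    have h2d2 : 4 ≤ 2^(d+2) := by
      calc 4 = 2^2 := rfl
      _ ≤ 2^(d+2) := Nat.pow_le_pow_right (by omega) (by omega)
    have hs7 : s = 7 := by omega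
    rw [hs7] at h8
    norm_num at h8
  -- j ≥ 1
  have hde3 : 3 ≤ (d+3) * e := by
    calc 3 ≤ (d+3) * 1 := by omega
    _ ≤ (d+3) * e := Nat.mul_le_mul_left _ he
  set g0 := Nat.gcd (2*j) ((d+3)*e) with hg0def
  clear_value g0
  have hg0pos : 0 < g0 := by rw [hg0def]; exact Nat.gcd_pos_of_pos_right _ (by omega)
  have hg0d : g0 ∣ (d+3) * e := by rw [hg0def]; exact Nat.gcd_dvd_right _ _
  have hg0j : g0 ∣ 2 * j := by rw [hg0def]; exact Nat.gcd_dvd_left _ _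
  set s' := s / Nat.gcd s 4 with hs'def
  clear_value s'
  have hgs : Nat.gcd s 4 ∣ s := Nat.gcd_dvd_left _ _
  have hs'dvd_s : s' ∣ s := by rw [hs'def]; exact Nat.div_dvd_of_dvd hgs
  have hs'1 : s' ∣ p ^ j + 1 := by rw [hs'def]; exact aux_div_gcd_dvd hspos (by norm_num) hdvd4
  have hs's : s ≤ 4 * s' := by
    have h1 : s' * Nat.gcd s 4 = s := by rw [hs'def]; exact Nat.div_mul_cancel hgs
    have h2 : Nat.gcd s 4 ≤ 4 := Nat.le_of_dvd (by norm_num) (Nat.gcd_dvd_right _ _)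
    calc s = s' * Nat.gcd s 4 := h1.symm
    _ ≤ s' * 4 := Nat.mul_le_mul_left _ h2
    _ = 4 * s' := by ring
  have hs'pos : 0 < s' := by
    rw [hs'def]
    exact Nat.div_pos (Nat.le_of_dvd hspos hgs) (Nat.gcd_pos_of_pos_left _ hspos)
  have hpj1 : 1 ≤ p ^ j := Nat.one_le_pow _ _ (by omega)
  have hs'2j : s' ∣ p ^ (2*j) - 1 := by
    have hpow : p^(2*j) = (p^j)^2 := by rw [mul_comm, pow_mul]
    have h1 : (p^j+1) * (p^j - 1) = p^(2*j) - 1 := by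
      obtain ⟨b, hb⟩ : ∃ b, p ^ j = b + 1 := ⟨p^j - 1, by omega⟩
      rw [hpow, hb]
      have h5 : (b+1)^2 = (b+1+1)*((b+1)-1) + 1 := by
        simp only [Nat.add_sub_cancel]
        ring
      omega
    exact h1 ▸ (hs'1.mul_right _)
  have hsd : s ∣ q ^ (d+3) - 1 := ⟨q-1, hs.symm⟩
  have hqde : q ^ (d+3) = p ^ ((d+3)*e) := by rw [hq, ← pow_mul, mul_comm]
  have hs'de : s' ∣ p ^ ((d+3)*e) - 1 := hs'dvd_s.trans (hqde ▸ hsd)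
  have hs'g0 : s' ∣ p ^ g0 - 1 := by
    rw [hg0def]; exact aux_gcd_pow p s' (2*j) ((d+3)*e) hp2 (by omega) hs'2j hs'de
  have hpg0 : 2 ≤ p ^ g0 := by
    calc 2 = 2^1 := rfl
    _ ≤ p^1 := Nat.pow_le_pow_left hp2 1
    _ ≤ p^g0 := Nat.pow_le_pow_right (by omega) hg0pos
  have hs'le : s' ≤ p ^ g0 - 1 := Nat.le_of_dvd (by omega) hs'g0
  -- main inequality e*(d+2) < g0 + 2
  have h4p2 : 4 ≤ p^2 := by
    calc 4 = 2^2 := rfl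
    _ ≤ p^2 := Nat.pow_le_pow_left hp2 2
  have hmain : e * (d+2) < g0 + 2 := by
    have h2 : p ^ (e*(d+2)) < p ^ (g0 + 2) := by
      calc p ^ (e*(d+2)) = q^(d+2) := by rw [hq, ← pow_mul]
      _ < s := hsgt
      _ ≤ 4 * s' := hs's
      _ ≤ 4 * (p^g0 - 1) := Nat.mul_le_mul_left _ hs'le
      _ < 4 * p ^ g0 := by omega
      _ ≤ p^2 * p ^ g0 := Nat.mul_le_mul_right _ h4p2
      _ = p^(g0+2) := by rw [pow_add, mul_comm]
    exact (Nat.pow_lt_pow_iff_right hp.one_lt).mp h2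
  have hg0d' := hg0d
  obtain ⟨c, hc⟩ := hg0d'
  rcases c with _ | _ | c
  · simp at hc; omega
  · -- CASE A : g0 = (d+3)*e
    norm_num at hc
    have hg0j' := hg0j
    obtain ⟨c2, hc2⟩ := hg0j'
    rw [← hc] at hc2
    have h2j : 2*j = (d+3)*e := by
      rcases c2 with _ | _ | c2
      · simp at hc2; omega
      · simpa using hc2
      · exfalso
        have h1 : (d+3)*e*2 ≤ (d+3)*e*(c2+1+1) := Nat.mul_le_mul_left _ (by omega)
        omega
    have hsle : s ≤ 4*(p^j+1) := Nat.le_of_dvd (by positivity) hdvd4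
    have h8pj : 4*(p^j+1) ≤ 8*(p^j) := by omega
    have hp3 : (8:ℕ) ≤ p^3 := by
      calc (8:ℕ) = 2^3 := rfl
      _ ≤ p^3 := Nat.pow_le_pow_left hp2 3
    have hchain : p^(e*(d+2)) < p^(j+3) := by
      calc p^(e*(d+2)) = q^(d+2) := by rw [hq, ← pow_mul]
      _ < s := hsgt
      _ ≤ 8*p^j := le_trans hsle h8pj
      _ ≤ p^3 * p^j := Nat.mul_le_mul_right _ hp3
      _ = p^(j+3) := by rw [← pow_add, add_comm]
    have hBj : e*(d+2) < j+3 := (Nat.pow_lt_pow_iff_right hp.one_lt).mp hchain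
    have hC : e*(d+1) ≤ 4 := by ring_nf at hBj h2j ⊢; omega
    have hed : d ≤ e*d := Nat.le_mul_of_pos_left d he
    have hcases : (e = 1 ∧ d = 1) ∨ (e = 1 ∧ d = 3) ∨ (e = 2 ∧ d = 0) ∨
        (e = 2 ∧ d = 1) ∨ (e = 4 ∧ d = 0) := by
      have hee : e ≤ 4 := by ring_nf at hC; omega
      have hdd : d ≤ 3 := by ring_nf at hC; omega
      interval_cases e <;> interval_cases d <;> omega
    rcases hcases with ⟨rfl, rfl⟩ | ⟨rfl, rfl⟩ | ⟨rfl, rfl⟩ | ⟨rfl, rfl⟩ | ⟨rfl, rfl⟩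
    · -- e = 1, d = 1 : the good case (d_orig = 4, q = p)
      rw [pow_one] at hq
      subst hq
      rename' q => p
      have hj2 : j = 2 := by omega
      subst hj2
      norm_num at hs
      -- hs : s * (p-1) = p^4 - 1
      have hfac : s = (p+1)*(p^2+1) := by
        have h1 : (1:ℕ) ≤ p^4 := Nat.one_le_pow _ _ (by omega)
        zify [show 1 ≤ p from by omega, h1] at hs
        have h2 : ((s:ℤ))*((p:ℤ)-1) = (((p:ℤ)+1)*((p:ℤ)^2+1))*((p:ℤ)-1) := by
          rw [hs]; ring
        have h3 : (s:ℤ) = ((p:ℤ)+1)*((p:ℤ)^2+1) :=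
          mul_right_cancel₀ (by
            have h' : (2:ℤ) ≤ (p:ℤ) := by exact_mod_cast hp2
            omega) h2
        exact_mod_cast h3
      rw [hfac] at hdvd4
      have hpd : p + 1 ∣ 4 :=
        (Nat.mul_dvd_mul_iff_right (show 0 < p^2+1 by positivity)).mp hdvd4
      have hple : p ≤ 3 := by
        have := Nat.le_of_dvd (by norm_num) hpd; omega
      interval_cases p
      · norm_num at hpd
      · -- p = 3
        refine ⟨rfl, rfl, ?_⟩
        rw [hfac] at hdvd
        rcases hm with rfl | rfl | rfl <;> norm_num at hdvd <;> rfl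
    · -- e = 1, d = 3 : d_orig = 6, q = p, j = 3
      exfalso
      rw [pow_one] at hq
      subst hq
      rename' q => p
      have hj3 : j = 3 := by omega
      subst hj3
      norm_num at hs
      have hfac : s = (p^2+p+1)*(p^3+1) := by
        have h1 : (1:ℕ) ≤ p^6 := Nat.one_le_pow _ _ (by omega)
        zify [show 1 ≤ p from by omega, h1] at hs
        have h2 : ((s:ℤ))*((p:ℤ)-1) = (((p:ℤ)^2+(p:ℤ)+1)*((p:ℤ)^3+1))*((p:ℤ)-1) := by
          rw [hs]; ring
        have h3 : (s:ℤ) = ((p:ℤ)^2+(p:ℤ)+1)*((p:ℤ)^3+1) :=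
          mul_right_cancel₀ (by
            have h' : (2:ℤ) ≤ (p:ℤ) := by exact_mod_cast hp2
            omega) h2
        exact_mod_cast h3
      have hAs : p^2+p+1 ∣ s := hfac ▸ dvd_mul_right _ _
      have hA1 : p^2+p+1 ∣ 4*(p^3+1) := hAs.trans hdvd4
      have hA2 : p^2+p+1 ∣ p^3 - 1 := by
        have h1 : (p^2+p+1)*(p-1) = p^3-1 := by
          have h2 : (1:ℕ) ≤ p^3 := Nat.one_le_pow _ _ (by omega)
          zify [show 1 ≤ p from by omega, h2]
          ring
        exact ⟨p-1, h1.symm⟩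
      have h8' := aux_dvd8 hA1 hA2 (Nat.one_le_pow _ _ (by omega))
      have hle8 : p^2+p+1 ≤ 8 := Nat.le_of_dvd (by norm_num) h8'
      have hple : p ≤ 2 := by nlinarith
      have hpe : p = 2 := by omega
      subst hpe
      norm_num at h8'
    · -- e = 2, d = 0 : d_orig = 3, q = p^2, j = 3
      exfalso
      subst hq
      have hj3 : j = 3 := by omega
      subst hj3
      rw [← pow_mul] at hs
      norm_num at hs
      -- hs : s * (p^2-1) = p^6-1
      have hfac : s = p^4+p^2+1 := by
        have h1 : (1:ℕ) ≤ p^6 := Nat.one_le_pow _ _ (by omega)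
        have h4 : (1:ℕ) ≤ p^2 := Nat.one_le_pow _ _ (by omega)
        zify [h4, h1] at hs
        have h2 : ((s:ℤ))*((p:ℤ)^2-1) = (((p:ℤ)^4+(p:ℤ)^2+1))*((p:ℤ)^2-1) := by
          rw [hs]; ring
        have h3 : (s:ℤ) = ((p:ℤ)^4+(p:ℤ)^2+1) :=
          mul_right_cancel₀ (by
            have h' : (2:ℤ) ≤ (p:ℤ) := by exact_mod_cast hp2
            have h'' : (4:ℤ) ≤ (p:ℤ)^2 := by nlinarith
            have h''' : (4:ℤ) ≤ (p:ℤ)^4 := by nlinarith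
            omega) h2
        exact_mod_cast h3
      have hAs : p^2+p+1 ∣ s := by
        have hX : p^2+p+1 ∣ (p^2+p+1)*(p^2+1) := dvd_mul_right _ _
        have hY : p^2+p+1 ∣ (p^2+p+1)*p := dvd_mul_right _ _
        have hsum : (p^2+p+1)*(p^2+1) = (p^2+p+1)*p + s := by rw [hfac]; ring
        rw [hsum] at hX
        exact (Nat.dvd_add_right hY).mp hX
      have hA1 : p^2+p+1 ∣ 4*(p^3+1) := hAs.trans hdvd4
      have hA2 : p^2+p+1 ∣ p^3 - 1 := by
        have h1 : (p^2+p+1)*(p-1) = p^3-1 := by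
          have h2 : (1:ℕ) ≤ p^3 := Nat.one_le_pow _ _ (by omega)
          zify [show 1 ≤ p from by omega, h2]
          ring
        exact ⟨p-1, h1.symm⟩
      have h8' := aux_dvd8 hA1 hA2 (Nat.one_le_pow _ _ (by omega))
      have hle8 : p^2+p+1 ≤ 8 := Nat.le_of_dvd (by norm_num) h8'
      have hple : p ≤ 2 := by nlinarith
      have hpe : p = 2 := by omega
      subst hpe
      norm_num at h8'
    · -- e = 2, d = 1 : d_orig = 4, q = p^2, j = 4
      exfalso
      subst hq
      have hj4 : j = 4 := by omega
      subst hj4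
      rw [← pow_mul] at hs
      norm_num at hs
      -- hs : s * (p^2-1) = p^8-1
      have hfac : s = (p^2+1)*(p^4+1) := by
        have h1 : (1:ℕ) ≤ p^8 := Nat.one_le_pow _ _ (by omega)
        have h4 : (1:ℕ) ≤ p^2 := Nat.one_le_pow _ _ (by omega)
        zify [h4, h1] at hs
        have h2 : ((s:ℤ))*((p:ℤ)^2-1) = (((p:ℤ)^2+1)*((p:ℤ)^4+1))*((p:ℤ)^2-1) := by
          rw [hs]; ring
        have h3 : (s:ℤ) = ((p:ℤ)^2+1)*((p:ℤ)^4+1) :=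
          mul_right_cancel₀ (by
            have h' : (2:ℤ) ≤ (p:ℤ) := by exact_mod_cast hp2
            have h'' : (4:ℤ) ≤ (p:ℤ)^2 := by nlinarith
            have h''' : (4:ℤ) ≤ (p:ℤ)^4 := by nlinarith
            omega) h2
        exact_mod_cast h3
      rw [hfac] at hdvd4
      have hpd : p^2 + 1 ∣ 4 :=
        (Nat.mul_dvd_mul_iff_right (show 0 < p^4+1 by positivity)).mp hdvd4
      have := Nat.le_of_dvd (by norm_num) hpd
      omega
    · -- e = 4, d = 0 : d_orig = 3, q = p^4, j = 6
      exfalso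
      subst hq
      have hj6 : j = 6 := by omega
      subst hj6
      rw [← pow_mul] at hs
      norm_num at hs
      -- hs : s * (p^4-1) = p^12-1
      have hfac : s = p^8+p^4+1 := by
        have h1 : (1:ℕ) ≤ p^12 := Nat.one_le_pow _ _ (by omega)
        have h4 : (1:ℕ) ≤ p^4 := Nat.one_le_pow _ _ (by omega)
        zify [h4, h1] at hs
        have h2 : ((s:ℤ))*((p:ℤ)^4-1) = (((p:ℤ)^8+(p:ℤ)^4+1))*((p:ℤ)^4-1) := by
          rw [hs]; ring
        have h3 : (s:ℤ) = ((p:ℤ)^8+(p:ℤ)^4+1) :=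
          mul_right_cancel₀ (by
            have h' : (2:ℤ) ≤ (p:ℤ) := by exact_mod_cast hp2
            have h'' : (4:ℤ) ≤ (p:ℤ)^2 := by nlinarith
            have h''' : (4:ℤ) ≤ (p:ℤ)^4 := by nlinarith
            omega) h2
        exact_mod_cast h3
      have hAs : p^4+p^2+1 ∣ s := by
        have hX : p^4+p^2+1 ∣ (p^4+p^2+1)*(p^4+1) := dvd_mul_right _ _
        have hY : p^4+p^2+1 ∣ (p^4+p^2+1)*(p^2) := dvd_mul_right _ _
        have hsum : (p^4+p^2+1)*(p^4+1) = (p^4+p^2+1)*(p^2) + s := by rw [hfac]; ring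
        rw [hsum] at hX
        exact (Nat.dvd_add_right hY).mp hX
      have hA1 : p^4+p^2+1 ∣ 4*(p^6+1) := hAs.trans hdvd4
      have hA2 : p^4+p^2+1 ∣ p^6 - 1 := by
        have h1 : (p^4+p^2+1)*(p^2-1) = p^6-1 := by
          have h2 : (1:ℕ) ≤ p^6 := Nat.one_le_pow _ _ (by omega)
          have h4' : (1:ℕ) ≤ p^2 := Nat.one_le_pow _ _ (by omega)
          zify [h4', h2]
          ring
        exact ⟨p^2-1, h1.symm⟩
      have h8' := aux_dvd8 hA1 hA2 (Nat.one_le_pow _ _ (by omega))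
      have hle8 : p^4+p^2+1 ≤ 8 := Nat.le_of_dvd (by norm_num) h8'
      have h16 : (16:ℕ) ≤ p^4 := by
        calc (16:ℕ) = 2^4 := rfl
        _ ≤ p^4 := Nat.pow_le_pow_left hp2 4
      omega
  · -- CASE B : 2*g0 ≤ (d+3)*e
    exfalso
    have hg2 : 2*g0 ≤ (d+3)*e := by
      have h1 : g0*2 ≤ g0*(c+1+1) := Nat.mul_le_mul_left _ (by omega)
      omega
    have hC2 : e*(d+1) ≤ 2 := by ring_nf at hmain hg2 ⊢; omega
    have hed : d ≤ e*d := Nat.le_mul_of_pos_left d he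
    have hcases : (e = 1 ∧ d = 0) ∨ (e = 1 ∧ d = 1) ∨ (e = 2 ∧ d = 0) := by
      have hee : e ≤ 2 := by ring_nf at hC2; omega
      have hdd : d ≤ 1 := by ring_nf at hC2; omega
      interval_cases e <;> interval_cases d <;> omega
    rcases hcases with ⟨rfl, rfl⟩ | ⟨rfl, rfl⟩ | ⟨rfl, rfl⟩
    · -- e=1, d=0: d_orig=3
      have h3 : g0 ∣ 3 := by simpa using hg0d
      have hg01 : g0 = 1 := by
        rcases (Nat.prime_three).eq_one_or_self_of_dvd g0 h3 with h | h <;> omega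
      rw [hg01, pow_one] at hs'g0
      have hs'j : s' ∣ p^j - 1 := hs'g0.trans (by simpa using Nat.sub_dvd_pow_sub_pow p 1 j)
      have h2 : s' ∣ 2 := by
        have hre : p^j + 1 = (p^j - 1) + 2 := by omega
        rw [hre] at hs'1
        exact (Nat.dvd_add_right hs'j).mp hs'1
      have hs8 : s ≤ 8 := by
        have := Nat.le_of_dvd (by norm_num) h2
        omega
      rw [pow_one] at hq
      subst hq
      rename' q => p
      have hple : p ≤ 2 := by
        by_contra hgt
        push_neg at hgt
        have h9 : 9 ≤ p^(0+2) := by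
          calc (9:ℕ) = 3^2 := by norm_num
          _ ≤ p^(0+2) := Nat.pow_le_pow_left hgt _
        omega
      have hpe : p = 2 := by omega
      subst hpe
      have hs7 : s = 7 := by rw [hsdef]; norm_num
      rw [hs7] at hdvd4
      have hjlt : j < 3 := by simpa using hj
      interval_cases j <;> norm_num at hdvd4
    · -- e=1, d=1: d_orig=4
      have h2g : 2 ∣ g0 := by
        rw [hg0def]
        exact Nat.dvd_gcd ⟨j, rfl⟩ (by norm_num)
      have hg02 : g0 = 2 := by
        have h24 : 2*g0 ≤ 4 := by simpa using hg2
        omega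
      have hjodd : ¬ 2 ∣ j := by
        rintro ⟨t, ht⟩
        have h4g : (4:ℕ) ∣ g0 := by
          rw [hg0def]
          exact Nat.dvd_gcd ⟨t, by omega⟩ (by norm_num)
        omega
      rw [hg02] at hs'le
      rw [pow_one] at hq
      subst hq
      rename' q => p
      have hlt : p^3 < 4 * p^2 := by
        have h1 : p^(1+2) < s := hsgt
        have h2 : s ≤ 4*(p^2-1) := le_trans hs's (Nat.mul_le_mul_left _ hs'le)
        have h3 : p^(1+2) = p^3 := by norm_num
        omega
      have hple : p ≤ 3 := by
        by_contra hgt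
        push_neg at hgt
        have h1 : 4*p^2 ≤ p*p^2 := Nat.mul_le_mul_right _ hgt
        have hpp : p*p^2 = p^3 := by ring
        omega
      have hjlt : j < 4 := by simpa using hj
      interval_cases p
      · have hs15 : s = 15 := by rw [hsdef]; norm_num
        rw [hs15] at hdvd4
        interval_cases j
        · norm_num at hdvd4
        · exact hjodd ⟨1, rfl⟩
        · norm_num at hdvd4
      · have hs40 : s = 40 := by rw [hsdef]; norm_num
        rw [hs40] at hdvd4
        interval_cases j
        · norm_num at hdvd4
        · exact hjodd ⟨1, rfl⟩
        · norm_num at hdvd4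
    · -- e=2, d=0: d_orig=3, size contradiction
      have h2g : 2 ∣ g0 := by
        rw [hg0def]
        exact Nat.dvd_gcd ⟨j, rfl⟩ (by norm_num)
      omega

set_option maxHeartbeats 1000000 in
/-- Lemma 2.5(a): in `ΓL_1(p^{de}) = ⟨x⟩ : ⟨y⟩` with `o(x) = p^{de} - 1`, `o(y) = de`,
`⟨x⟩ ∩ ⟨y⟩ = 1` and `x^y = x^p`, with `d ≥ 3` and `q = p^e`: if some `g` and
`m ∈ {1, 2, 4}` satisfy `x^m · (x^m)^g ∈ Z = ⟨x^{(q^d-1)/(q-1)}⟩`, then `d = 4`,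
`q = 3` and `m = 4`. -/
theorem gammaL1_scalar_condition_d_ge_three
    (p e d : ℕ) (hp : p.Prime) (he : 1 ≤ e) (hd : 3 ≤ d)
    (G : Type*) [Group G] [Finite G] (x y : G)
    (hgen : Subgroup.closure {x, y} = ⊤)
    (hx : orderOf x = p ^ (d * e) - 1)
    (hy : orderOf y = d * e)
    (hint : Subgroup.zpowers x ⊓ Subgroup.zpowers y = ⊥)
    (hconj : y⁻¹ * x * y = x ^ p)
    (g : G) (m : ℕ) (hm : m ∈ ({1, 2, 4} : Set ℕ))
    (hZ : x ^ m * (g⁻¹ * x ^ m * g) ∈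
      Subgroup.zpowers (x ^ (((p ^ e) ^ d - 1) / (p ^ e - 1)))) :
    d = 4 ∧ p ^ e = 3 ∧ m = 4 := by
  have hp2 : 2 ≤ p := hp.two_le
  have hde1 : 1 ≤ d * e := by
    calc 1 ≤ 3 * 1 := by norm_num
    _ ≤ d * e := Nat.mul_le_mul hd he
  have hpde1 : 1 ≤ p ^ (d * e) := Nat.one_le_pow _ _ (by omega)
  have hxn : x ^ (p ^ (d * e) - 1) = 1 := by rw [← hx]; exact pow_orderOf_eq_one x
  have hxp : x ^ (p ^ (d * e)) = x := by
    have h1 : p ^ (d * e) = (p ^ (d * e) - 1) + 1 := by omega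
    rw [h1, pow_succ, hxn, one_mul]
  have hconjn : ∀ k : ℕ, y⁻¹ * x ^ k * y = x ^ (p * k) := by
    intro k
    have h1 : y⁻¹ * x ^ k * y = (y⁻¹ * x * y) ^ k := by
      calc y⁻¹ * x ^ k * y = y⁻¹ * x ^ k * y⁻¹⁻¹ := by rw [inv_inv]
      _ = (y⁻¹ * x * y⁻¹⁻¹) ^ k := conj_pow.symm
      _ = (y⁻¹ * x * y) ^ k := by rw [inv_inv]
    rw [h1, hconj, ← pow_mul]
  have hyxyinv : y * x * y⁻¹ = x ^ (p ^ (d * e - 1)) := by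
    have h2 : p * p ^ (d * e - 1) = p ^ (d * e) := by
      rw [← pow_succ']
      congr 1
      omega
    have h1 : y⁻¹ * x ^ (p ^ (d * e - 1)) * y = x := by
      rw [hconjn, h2, hxp]
    calc y * x * y⁻¹ = y * (y⁻¹ * x ^ (p ^ (d * e - 1)) * y) * y⁻¹ := by rw [h1]
    _ = x ^ (p ^ (d * e - 1)) := by group
  have hconjz : ∀ t : ℤ, y⁻¹ * x ^ t * y ∈ Subgroup.zpowers x := by
    intro t
    have h1 : y⁻¹ * x ^ t * y = (y⁻¹ * x * y) ^ t := by
      calc y⁻¹ * x ^ t * y = y⁻¹ * x ^ t * y⁻¹⁻¹ := by rw [inv_inv]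
      _ = (y⁻¹ * x * y⁻¹⁻¹) ^ t := conj_zpow.symm
      _ = (y⁻¹ * x * y) ^ t := by rw [inv_inv]
    rw [h1, hconj]
    exact Subgroup.zpow_mem _ (pow_mem (Subgroup.mem_zpowers x) p) t
  have hconjz' : ∀ t : ℤ, y * x ^ t * y⁻¹ ∈ Subgroup.zpowers x := by
    intro t
    have h1 : y * x ^ t * y⁻¹ = (y * x * y⁻¹) ^ t := conj_zpow.symm
    rw [h1, hyxyinv]
    exact Subgroup.zpow_mem _ (pow_mem (Subgroup.mem_zpowers x) _) t
  have hnorm : (Subgroup.zpowers x).Normal := by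
    rw [← Subgroup.normalizer_eq_top_iff]
    rw [eq_top_iff, ← hgen, Subgroup.closure_le]
    intro z hz
    simp only [Set.mem_insert_iff, Set.mem_singleton_iff] at hz
    rcases hz with rfl | rfl
    · exact Subgroup.le_normalizer (Subgroup.mem_zpowers z)
    · rw [SetLike.mem_coe, Subgroup.mem_normalizer_iff]
      intro h
      constructor
      · rintro ⟨t, rfl⟩
        exact hconjz' t
      · intro hh
        obtain ⟨t, ht⟩ := hh
        have h2 := hconjz t
        have ht' : x ^ t = z * h * z⁻¹ := ht
        rwa [ht', show z⁻¹ * (z * h * z⁻¹) * z = h by group] at h2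
  have hgset : g ∈ ((Subgroup.zpowers x ⊔ Subgroup.zpowers y : Subgroup G) : Set G) := by
    have h1 : (⊤ : Subgroup G) ≤ Subgroup.zpowers x ⊔ Subgroup.zpowers y := by
      rw [← hgen, Subgroup.closure_le]
      intro z hz
      simp only [Set.mem_insert_iff, Set.mem_singleton_iff] at hz
      rcases hz with rfl | rfl
      · exact Subgroup.mem_sup_left (Subgroup.mem_zpowers z)
      · exact Subgroup.mem_sup_right (Subgroup.mem_zpowers z)
    exact h1 (Subgroup.mem_top g)
  rw [Subgroup.normal_mul] at hgset
  obtain ⟨a, ha, b, hb, rfl⟩ := hgset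
  obtain ⟨ta, rfl⟩ := ha
  obtain ⟨tb, rfl⟩ := hb
  set j : ℕ := (tb % ((d * e : ℕ) : ℤ)).toNat with hjdef
  have hdepos : (0:ℤ) < ((d * e : ℕ) : ℤ) := by exact_mod_cast hde1
  have hemod0 : 0 ≤ tb % ((d * e : ℕ) : ℤ) := Int.emod_nonneg _ (by omega)
  have hemodlt : tb % ((d * e : ℕ) : ℤ) < ((d * e : ℕ) : ℤ) := Int.emod_lt_of_pos _ hdepos
  have hjlt : j < d * e := by omega
  have hyb : y ^ tb = y ^ (j : ℕ) := by
    rw [← zpow_natCast]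
    have h1 : ((j : ℕ) : ℤ) = tb % ((d * e : ℕ) : ℤ) := Int.toNat_of_nonneg hemod0
    rw [h1, ← hy, zpow_mod_orderOf]
  have hcomm : x ^ (-ta) * (x : G) ^ (m : ℕ) * x ^ ta = x ^ (m : ℕ) := by
    rw [← zpow_natCast x m, ← zpow_add, ← zpow_add]
    congr 1
    ring
  have hcore : (x ^ ta * y ^ tb)⁻¹ * x ^ m * (x ^ ta * y ^ tb)
      = (y ^ (j:ℕ))⁻¹ * x ^ m * y ^ (j:ℕ) := by
    rw [hyb]
    calc (x ^ ta * y ^ (j:ℕ))⁻¹ * x ^ m * (x ^ ta * y ^ (j:ℕ))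
        = (y ^ (j:ℕ))⁻¹ * (x ^ (-ta) * x ^ (m:ℕ) * x ^ ta) * y ^ (j:ℕ) := by
          rw [zpow_neg]; group
    _ = (y ^ (j:ℕ))⁻¹ * x ^ m * y ^ (j:ℕ) := by rw [hcomm]
  have hiter : ∀ k : ℕ, (y ^ k)⁻¹ * x * y ^ k = x ^ (p ^ k) := by
    intro k
    induction k with
    | zero => simp
    | succ n ih =>
      have h1 : y ^ (n+1) = y ^ n * y := by rw [pow_succ]
      rw [h1, mul_inv_rev]
      calc y⁻¹ * (y ^ n)⁻¹ * x * (y ^ n * y) = y⁻¹ * ((y ^ n)⁻¹ * x * y ^ n) * y := by group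
      _ = y⁻¹ * x ^ (p ^ n) * y := by rw [ih]
      _ = x ^ (p * p ^ n) := hconjn _
      _ = x ^ (p ^ (n+1)) := by rw [← pow_succ']
  have hconjm : (y ^ (j:ℕ))⁻¹ * x ^ m * y ^ (j:ℕ) = x ^ (p ^ j * m) := by
    calc (y ^ (j:ℕ))⁻¹ * x ^ m * y ^ (j:ℕ)
        = (y ^ (j:ℕ))⁻¹ * x ^ m * ((y ^ (j:ℕ))⁻¹)⁻¹ := by rw [inv_inv]
    _ = ((y ^ (j:ℕ))⁻¹ * x * ((y ^ (j:ℕ))⁻¹)⁻¹) ^ m := conj_pow.symm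
    _ = ((y ^ (j:ℕ))⁻¹ * x * y ^ (j:ℕ)) ^ m := by rw [inv_inv]
    _ = (x ^ (p ^ j)) ^ m := by rw [hiter]
    _ = x ^ (p ^ j * m) := by rw [← pow_mul]
  rw [hcore, hconjm, ← pow_add] at hZ
  obtain ⟨c, hc⟩ := hZ
  have hSn : ((p ^ e) ^ d - 1) / (p ^ e - 1) ∣ p ^ (d * e) - 1 := by
    have h1 : (p ^ e - 1) ∣ ((p ^ e) ^ d - 1) := by
      simpa using Nat.sub_dvd_pow_sub_pow (p ^ e) 1 d
    have h2 : ((p ^ e) ^ d - 1) / (p ^ e - 1) * (p ^ e - 1) = (p ^ e) ^ d - 1 :=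
      Nat.div_mul_cancel h1
    have h3 : (p ^ e) ^ d = p ^ (d * e) := by rw [← pow_mul, mul_comm]
    exact ⟨p ^ e - 1, by rw [← h3]; exact h2.symm⟩
  set S := ((p ^ e) ^ d - 1) / (p ^ e - 1) with hSdef
  have h1 : (x : G) ^ ((S : ℤ) * c) = x ^ ((m + p ^ j * m : ℕ) : ℤ) := by
    rw [zpow_mul, zpow_natCast, zpow_natCast]
    exact hc
  have h2 : (x : G) ^ ((S : ℤ) * c - ((m + p ^ j * m : ℕ) : ℤ)) = 1 := by
    rw [zpow_sub, h1]
    simp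
  have horder : ((p ^ (d * e) - 1 : ℕ) : ℤ) ∣ (S : ℤ) * c - ((m + p ^ j * m : ℕ) : ℤ) := by
    rw [← hx]
    exact orderOf_dvd_iff_zpow_eq_one.mpr h2
  have hSK : (S : ℤ) ∣ ((m + p ^ j * m : ℕ) : ℤ) := by
    have hA : (S : ℤ) ∣ ((p ^ (d * e) - 1 : ℕ) : ℤ) := Int.natCast_dvd_natCast.mpr hSn
    have hB : (S : ℤ) ∣ (S : ℤ) * c := dvd_mul_right _ _
    have hC := dvd_sub hB (hA.trans horder)
    simpa using hC
  have hSKnat : S ∣ m + p ^ j * m := Int.ofNat_dvd.mp hSK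
  have hfin : S ∣ m * (p ^ j + 1) := by
    have h3 : m + p ^ j * m = m * (p ^ j + 1) := by ring
    rwa [h3] at hSKnat
  have hmors : m = 1 ∨ m = 2 ∨ m = 4 := by simpa using hm
  exact key_numth p e d m j hp he hd hmors hjlt hfin
end

section
/- Let p be an odd prime, e ≥ 1, and q = p^e ≥ 5. Let G be a finite group generated by elements x and y such that x has order p^{2e} − 1, y has order 2e, ⟨x⟩ ∩ ⟨y⟩ = 1, and y⁻¹xy = x^p. Let Z = ⟨x^{q+1}⟩. If there exist g ∈ G and m ∈ {1, 2} such that x^m · (g⁻¹ x^m g) ∈ Z, then g = x^i y^e for some integer i with 0 ≤ i ≤ p^{2e} − 1. -/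
open Pointwise

private lemma aux_exponent_lemma (p e b r : ℕ) (hp : 3 ≤ p) (he : 1 ≤ e) (hq : 5 ≤ p ^ e)
    (hr2 : 2 * r = p ^ e + 1) (hb : b < 2 * e) (hdvd : r ∣ p ^ b + 1) : b = e := by
  have hr3 : 3 ≤ r := by omega
  have hre : r ∣ p ^ e + 1 := ⟨2, by omega⟩
  have hp1 : 1 ≤ p := by omega
  have key : ∀ d : ℕ, 1 ≤ d → d ≤ e - 1 → r ∣ p ^ d - 1 → False := by
    intro d hd1 hd2 hdvd'
    have h1 : 2 ≤ p ^ d - 1 := by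
      have : p ≤ p ^ d := Nat.le_self_pow (by omega) p
      omega
    have h2 : p ^ d - 1 < r := by
      have hde : p ^ d ≤ p ^ (e - 1) := Nat.pow_le_pow_right (by omega) hd2
      have h3 : 3 * p ^ (e - 1) ≤ p ^ e := by
        calc 3 * p ^ (e-1) ≤ p * p ^ (e-1) := Nat.mul_le_mul_right _ hp
          _ = p ^ e := by rw [← pow_succ']; congr 1; omega
      omega
    have := Nat.eq_zero_of_dvd_of_lt hdvd' h2
    omega
  rcases Nat.lt_trichotomy b e with h | h | h
  · rcases Nat.eq_zero_or_pos b with rfl | hb1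
    · simp at hdvd
      have := Nat.le_of_dvd (by omega) hdvd
      omega
    · set d := e - b with hd
      have hdd : r ∣ p ^ d * (p ^ b + 1) - (p ^ e + 1) :=
        Nat.dvd_sub (Dvd.dvd.mul_left hdvd _) hre
      have heq : p ^ d * (p ^ b + 1) - (p ^ e + 1) = p ^ d - 1 := by
        have : p ^ d * p ^ b = p ^ e := by rw [← pow_add]; congr 1; omega
        have h2 : p ^ d * (p ^ b + 1) = p ^ e + p ^ d := by rw [Nat.mul_add, this, mul_one]
        have h1 : 1 ≤ p ^ d := Nat.one_le_pow _ _ (by omega)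
        omega
      exact absurd (heq ▸ hdd) (fun hh => key d (by omega) (by omega) hh)
  · exact h
  · set d := b - e with hd
    have hdd : r ∣ p ^ d * (p ^ e + 1) - (p ^ b + 1) :=
      Nat.dvd_sub (Dvd.dvd.mul_left hre _) hdvd
    have heq : p ^ d * (p ^ e + 1) - (p ^ b + 1) = p ^ d - 1 := by
      have : p ^ d * p ^ e = p ^ b := by rw [← pow_add]; congr 1; omega
      have h2 : p ^ d * (p ^ e + 1) = p ^ b + p ^ d := by rw [Nat.mul_add, this, mul_one]
      have h1 : 1 ≤ p ^ d := Nat.one_le_pow _ _ (by omega)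
      omega
    exact absurd (heq ▸ hdd) (fun hh => key d (by omega) (by omega) hh)

/-- Lemma 2.5(b): in `ΓL_1(p^{2e}) = ⟨x⟩ : ⟨y⟩` with `o(x) = p^{2e} - 1`, `o(y) = 2e`,
`⟨x⟩ ∩ ⟨y⟩ = 1` and `x^y = x^p`, where `p` is odd and `q = p^e ≥ 5`: if some `g` and
`m ∈ {1, 2}` satisfy `x^m · (x^m)^g ∈ Z = ⟨x^{q+1}⟩`, then `g = x^i y^e` for some
`0 ≤ i ≤ p^{2e} - 1`. -/
theorem gammaL1_scalar_condition_d_eq_two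
    (p e : ℕ) (hp : p.Prime) (hodd : Odd p) (he : 1 ≤ e) (hq : 5 ≤ p ^ e)
    (G : Type*) [Group G] [Finite G] (x y : G)
    (hgen : Subgroup.closure {x, y} = ⊤)
    (hx : orderOf x = p ^ (2 * e) - 1)
    (hy : orderOf y = 2 * e)
    (hint : Subgroup.zpowers x ⊓ Subgroup.zpowers y = ⊥)
    (hconj : y⁻¹ * x * y = x ^ p)
    (g : G) (m : ℕ) (hm : m ∈ ({1, 2} : Set ℕ))
    (hZ : x ^ m * (g⁻¹ * x ^ m * g) ∈ Subgroup.zpowers (x ^ (p ^ e + 1))) :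
    ∃ i : ℕ, i ≤ p ^ (2 * e) - 1 ∧ g = x ^ i * y ^ e := by
  have hp3 : 3 ≤ p := by
    have h2 := hp.two_le
    rcases hodd with ⟨k, hk⟩
    omega
  have hqe : 5 ≤ p ^ e := hq
  have hp2e : 25 ≤ p ^ (2 * e) := by
    have : p ^ (2 * e) = p ^ e * p ^ e := by rw [two_mul, pow_add]
    nlinarith
  have hordpos : 0 < orderOf x := by rw [hx]; omega
  -- x^p generates the same subgroup as x
  have hcop : Nat.Coprime (orderOf x) p := by
    rw [Nat.coprime_comm, hp.coprime_iff_not_dvd]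
    intro hdvd
    have h1 : p ∣ p ^ (2 * e) := dvd_pow_self p (by omega)
    rw [hx] at hdvd
    have h2 : p ∣ p ^ (2 * e) - (p ^ (2 * e) - 1) := Nat.dvd_sub h1 hdvd
    have h3 : p ^ (2 * e) - (p ^ (2 * e) - 1) = 1 := by omega
    rw [h3] at h2
    have := Nat.le_of_dvd one_pos h2
    omega
  have hzp : Subgroup.zpowers (x ^ p) = Subgroup.zpowers x := by
    apply Subgroup.eq_of_le_of_card_ge
    · exact Subgroup.zpowers_le.mpr (Subgroup.pow_mem _ (Subgroup.mem_zpowers x) p)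
    · rw [Nat.card_zpowers, Nat.card_zpowers, hcop.orderOf_pow]
  -- ⟨x⟩ is normal, hence G = ⟨x⟩⟨y⟩
  have hyn : ∀ z : G, z⁻¹ * x * z = x ^ p → z ∈ Subgroup.normalizer (Subgroup.zpowers x : Set G) := by
    intro z hc
    rw [Subgroup.mem_normalizer_iff'']
    intro h
    have hmap : (Subgroup.zpowers x).map (MulAut.conj z⁻¹).toMonoidHom = Subgroup.zpowers x := by
      rw [MonoidHom.map_zpowers]
      have hcx : (MulAut.conj z⁻¹) x = x ^ p := by simpa [MulAut.conj, mul_assoc] using hc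
      show Subgroup.zpowers ((MulAut.conj z⁻¹) x) = _
      rw [hcx]; exact hzp
    constructor
    · intro hh
      have := Subgroup.mem_map_of_mem (MulAut.conj z⁻¹).toMonoidHom hh
      rw [hmap] at this
      simpa [MulAut.conj, mul_assoc] using this
    · intro hh
      have h2 : (MulAut.conj z⁻¹) h ∈ (Subgroup.zpowers x).map (MulAut.conj z⁻¹).toMonoidHom := by
        rw [hmap]; simpa [MulAut.conj, mul_assoc] using hh
      rcases Subgroup.mem_map.mp h2 with ⟨k, hk, hke⟩
      exact (MulAut.conj z⁻¹).injective (a₁ := k) (a₂ := h) hke ▸ hk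
  have hN : (Subgroup.zpowers x).Normal := by
    rw [← Subgroup.normalizer_eq_top_iff, ← top_le_iff, ← hgen, Subgroup.closure_le]
    refine Set.insert_subset_iff.mpr ⟨Subgroup.le_normalizer (Subgroup.mem_zpowers x),
      Set.singleton_subset_iff.mpr (hyn y hconj)⟩
  have htop : Subgroup.zpowers x ⊔ Subgroup.zpowers y = ⊤ := by
    apply top_unique
    rw [← hgen, Subgroup.closure_le]
    refine Set.insert_subset_iff.mpr ⟨Subgroup.mem_sup_left (Subgroup.mem_zpowers x),
      Set.singleton_subset_iff.mpr (Subgroup.mem_sup_right (Subgroup.mem_zpowers y))⟩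
  have hg : g ∈ ((Subgroup.zpowers x : Set G) * (Subgroup.zpowers y : Set G)) := by
    rw [← Subgroup.normal_mul, htop]; trivial
  obtain ⟨xa, ha, yb, hb, hgeq0⟩ := hg
  rcases Subgroup.mem_zpowers_iff.mp ha with ⟨a, rfl⟩
  rcases Subgroup.mem_zpowers_iff.mp hb with ⟨bz, rfl⟩
  have hgeq1 : g = x ^ a * y ^ bz := hgeq0.symm
  -- reduce the y-exponent mod 2e
  have h2e : 0 < 2 * e := by omega
  obtain ⟨b, hbz, hblt⟩ : ∃ b : ℕ, (b : ℤ) = bz % ((2 * e : ℕ) : ℤ) ∧ b < 2 * e := by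
    refine ⟨(bz % ((2 * e : ℕ) : ℤ)).toNat, ?_, ?_⟩
    · rw [Int.toNat_of_nonneg (Int.emod_nonneg bz (by exact_mod_cast h2e.ne'))]
    · have h1 := Int.emod_lt_of_pos bz (show (0:ℤ) < ((2*e : ℕ) : ℤ) by exact_mod_cast h2e)
      have h2 := Int.emod_nonneg bz (show ((2*e : ℕ) : ℤ) ≠ 0 by exact_mod_cast h2e.ne')
      omega
  have hybz : y ^ bz = y ^ b := by
    conv_lhs => rw [← zpow_mod_orderOf]
    rw [hy, ← hbz, zpow_natCast]
  rw [hybz] at hgeq1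
  have hgeq : g = x ^ a * y ^ b := hgeq1
  -- conjugation formula
  have hconjn : ∀ n : ℕ, (y ^ n)⁻¹ * x * y ^ n = x ^ (p ^ n) := by
    intro n
    induction n with
    | zero => simp
    | succ n ih =>
      have hstep : (y ^ (n+1))⁻¹ * x * y ^ (n+1) = y⁻¹ * ((y ^ n)⁻¹ * x * y ^ n) * y := by
        rw [pow_succ]; group
      rw [hstep, ih, pow_succ, pow_mul]
      calc y⁻¹ * x ^ p ^ n * y = (y⁻¹ * x * y⁻¹⁻¹) ^ p ^ n * (y⁻¹ * y) := by
            rw [conj_pow]; group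
        _ = (x ^ p) ^ p ^ n := by rw [inv_inv, hconj]; group
        _ = (x ^ p ^ n) ^ p := by rw [← pow_mul, ← pow_mul, mul_comm]
  -- compute the element in hZ
  have hcomp : x ^ m * (g⁻¹ * x ^ m * g) = x ^ (m * (1 + p ^ b)) := by
    have h1 : g⁻¹ * x ^ m * g = (y ^ b)⁻¹ * x ^ m * y ^ b := by
      rw [hgeq]
      have hcomm : x ^ (-a) * x ^ (m : ℤ) * x ^ a = x ^ (m : ℤ) := by
        rw [← zpow_add, ← zpow_add]; congr 1; ring
      calc (x ^ a * y ^ b)⁻¹ * x ^ m * (x ^ a * y ^ b)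
          = (y ^ b)⁻¹ * (x ^ (-a) * x ^ (m : ℤ) * x ^ a) * y ^ b := by
            rw [zpow_natCast, zpow_neg]; group
        _ = (y ^ b)⁻¹ * x ^ m * y ^ b := by rw [hcomm, zpow_natCast]
    have h2 : (y ^ b)⁻¹ * x ^ m * y ^ b = x ^ (p ^ b * m) := by
      calc (y ^ b)⁻¹ * x ^ m * y ^ b = ((y ^ b)⁻¹ * x * ((y ^ b)⁻¹)⁻¹) ^ m := by
            rw [conj_pow]; group
        _ = (x ^ p ^ b) ^ m := by rw [inv_inv, hconjn]
        _ = x ^ (p ^ b * m) := by rw [pow_mul]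
    rw [h1, h2, ← pow_add]
    congr 1; ring
  rw [hcomp] at hZ
  -- extract divisibility
  have hQdvd : (p ^ e + 1) ∣ (p ^ (2 * e) - 1) := by
    obtain ⟨s, hs⟩ : ∃ s, p ^ e = s + 1 := ⟨p ^ e - 1, by omega⟩
    refine ⟨p ^ e - 1, ?_⟩
    have h1 : p ^ (2 * e) = p ^ e * p ^ e := by rw [two_mul, pow_add]
    rw [h1, hs]
    have h4 : s + 1 - 1 = s := by omega
    rw [h4]
    exact Nat.sub_eq_of_eq_add (by ring)
  have hdvdnat : (p ^ e + 1) ∣ m * (1 + p ^ b) := by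
    obtain ⟨t, ht0⟩ := hZ
    have ht : (x ^ (p ^ e + 1)) ^ t = x ^ (m * (1 + p ^ b)) := ht0
    have ht2 : x ^ (((p ^ e + 1 : ℕ) : ℤ) * t) = x ^ ((m * (1 + p ^ b) : ℕ) : ℤ) := by
      rw [zpow_mul, zpow_natCast, ht, zpow_natCast]
    have hmod := zpow_eq_zpow_iff_modEq.mp ht2
    have hdvd : (orderOf x : ℤ) ∣ ((m * (1 + p ^ b) : ℕ) : ℤ) - (p ^ e + 1 : ℕ) * t :=
      Int.ModEq.dvd hmod
    have hQord : ((p ^ e + 1 : ℕ) : ℤ) ∣ (orderOf x : ℤ) := by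
      rw [hx]; exact_mod_cast hQdvd
    have : ((p ^ e + 1 : ℕ) : ℤ) ∣ ((m * (1 + p ^ b) : ℕ) : ℤ) := by
      have h1 : ((p ^ e + 1 : ℕ) : ℤ) ∣ ((m * (1 + p ^ b) : ℕ) : ℤ) - (p ^ e + 1 : ℕ) * t :=
        dvd_trans hQord hdvd
      have h2 : ((p ^ e + 1 : ℕ) : ℤ) ∣ ((p ^ e + 1 : ℕ) : ℤ) * t := Dvd.intro t rfl
      have h3 := dvd_add h1 h2
      rwa [sub_add_cancel] at h3
    exact_mod_cast this
  -- the halved modulus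
  obtain ⟨r, hr⟩ : ∃ r, p ^ e + 1 = 2 * r := by
    have : Odd (p ^ e) := hodd.pow
    rcases this with ⟨k, hk⟩
    exact ⟨k + 1, by omega⟩
  have hrdvd : r ∣ p ^ b + 1 := by
    rcases hm with rfl | rfl
    · have : (p ^ e + 1) ∣ (1 + p ^ b) := by simpa using hdvdnat
      have h2 : r ∣ p ^ e + 1 := ⟨2, by omega⟩
      have := h2.trans this
      rwa [Nat.add_comm] at this
    · have h1 : (2 * r) ∣ 2 * (1 + p ^ b) := by rw [← hr]; simpa using hdvdnat
      have h2 : r ∣ 1 + p ^ b := (Nat.mul_dvd_mul_iff_left (by omega : 0 < 2)).mp h1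
      rwa [Nat.add_comm] at h2
  have hbe : b = e := aux_exponent_lemma p e b r hp3 he hq hr.symm hblt hrdvd
  -- finish
  subst hbe
  obtain ⟨i, hiz, hilt⟩ : ∃ i : ℕ, (i : ℤ) = a % ((orderOf x : ℕ) : ℤ) ∧ i < orderOf x := by
    refine ⟨(a % ((orderOf x : ℕ) : ℤ)).toNat, ?_, ?_⟩
    · rw [Int.toNat_of_nonneg (Int.emod_nonneg a (by exact_mod_cast hordpos.ne'))]
    · have h1 := Int.emod_lt_of_pos a (show (0:ℤ) < ((orderOf x : ℕ) : ℤ) by exact_mod_cast hordpos)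
      have h2 := Int.emod_nonneg a (show ((orderOf x : ℕ) : ℤ) ≠ 0 by exact_mod_cast hordpos.ne')
      omega
  have hxa : x ^ a = x ^ i := by
    conv_lhs => rw [← zpow_mod_orderOf]
    rw [← hiz, zpow_natCast]
  refine ⟨i, ?_, by rw [hgeq, hxa]⟩
  rw [hx] at hilt
  omega
end

section
/- Let G be a group acting transitively on a finite set Ω, and let H ≤ G be a subgroup that is semiregular on Ω with exactly two orbits H_0 and H_1. Let 𝓑 be a G-invariant partition of Ω. Then either every block B ∈ 𝓑 is a subset of H_0 or of H_1, or every block B ∈ 𝓑 satisfies B ∩ H_0 ≠ ∅ and B ∩ H_1 ≠ ∅. -/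
/-!
If some block `B` meets both `H`-orbits, then any other block `C` meets one of them, say at
`h • y` with `y ∈ B`; the block through `h • y` is `h • B`, and `h` preserves the orbit of the
point of `B` in the other orbit.
-/

open MulAction

theorem Setoid.IsPartition.nonempty_inter_orbit_of_nonempty_inter_orbit {K Ω : Type*} [Group K]
    [MulAction K Ω] {𝓑 : Set (Set Ω)} (hpart : Setoid.IsPartition 𝓑)
    (hinv : ∀ k : K, ∀ B ∈ 𝓑, (fun ω => k • ω) '' B ∈ 𝓑) {B C : Set Ω} {x y : Ω}
    (hB : B ∈ 𝓑) (hC : C ∈ 𝓑) (hxB : x ∈ B) (hyB : y ∈ B) (hCy : (C ∩ orbit K y).Nonempty) :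
    (C ∩ orbit K x).Nonempty := by
  obtain ⟨_, hkyC, k, rfl⟩ := hCy
  have hCB : (fun ω => k • ω) '' B = C :=
    Setoid.eq_of_mem_eqv_class hpart.2 (hinv k B hB) ⟨y, hyB, rfl⟩ hC hkyC
  exact ⟨k • x, hCB ▸ ⟨x, hxB, rfl⟩, mem_orbit x k⟩

theorem blocks_vs_biregular_orbits_general
    (G : Type*) [Group G] (Ω : Type*) [MulAction G Ω]
    (H : Subgroup G)
    (H0 H1 : Set Ω) (ω0 ω1 : Ω)
    (hH0 : H0 = MulAction.orbit H ω0) (hH1 : H1 = MulAction.orbit H ω1)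
    (hcover : H0 ∪ H1 = Set.univ)
    (𝓑 : Set (Set Ω)) (hpart : Setoid.IsPartition 𝓑)
    (hinv : ∀ g : G, ∀ B ∈ 𝓑, (fun ω => g • ω) '' B ∈ 𝓑) :
    (∀ B ∈ 𝓑, B ⊆ H0 ∨ B ⊆ H1) ∨
    (∀ B ∈ 𝓑, (B ∩ H0).Nonempty ∧ (B ∩ H1).Nonempty) := by
  by_cases hall : ∀ B ∈ 𝓑, B ⊆ H0 ∨ B ⊆ H1
  · exact Or.inl hall
  right
  push Not at hall
  obtain ⟨B, hB, hB0, hB1⟩ := hall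
  obtain ⟨x, hxB, hxH0⟩ := Set.not_subset.mp hB0
  obtain ⟨y, hyB, hyH1⟩ := Set.not_subset.mp hB1
  have hmem (z : Ω) : z ∈ H0 ∨ z ∈ H1 := Set.eq_univ_iff_forall.mp hcover z
  have hH0y : H0 = orbit H y :=
    hH0.trans (orbit_eq_iff.mpr (hH0 ▸ (hmem y).resolve_right hyH1)).symm
  have hH1x : H1 = orbit H x :=
    hH1.trans (orbit_eq_iff.mpr (hH1 ▸ (hmem x).resolve_left hxH0)).symm
  have hinvH : ∀ h : H, ∀ B ∈ 𝓑, (fun ω => h • ω) '' B ∈ 𝓑 := fun h => hinv h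
  intro C hC
  obtain ⟨c, hcC⟩ := Setoid.nonempty_of_mem_partition hpart hC
  rw [hH0y, hH1x] at hmem ⊢
  rcases hmem c with hc0 | hc1
  · exact ⟨⟨c, hcC, hc0⟩,
      hpart.nonempty_inter_orbit_of_nonempty_inter_orbit hinvH hB hC hxB hyB ⟨c, hcC, hc0⟩⟩
  · exact ⟨hpart.nonempty_inter_orbit_of_nonempty_inter_orbit hinvH hB hC hyB hxB ⟨c, hcC, hc1⟩,
      ⟨c, hcC, hc1⟩⟩

/-- Lemma 3.2: let `G` act transitively on a finite set `Ω`, and let `H ≤ G` be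
semiregular with exactly two orbits `H0` and `H1`. For any `G`-invariant partition `𝓑`
of `Ω`, either every block is contained in `H0` or in `H1`, or every block meets both
`H0` and `H1`. -/
theorem blocks_vs_biregular_orbits
    (G : Type*) [Group G] (Ω : Type*) [Fintype Ω] [MulAction G Ω]
    [MulAction.IsPretransitive G Ω]
    (H : Subgroup G)
    (hsemi : ∀ h : H, ∀ ω : Ω, (h : G) • ω = ω → h = 1)
    (H0 H1 : Set Ω) (ω0 ω1 : Ω)
    (hH0 : H0 = MulAction.orbit H ω0) (hH1 : H1 = MulAction.orbit H ω1)
    (hne : H0 ≠ H1) (hcover : H0 ∪ H1 = Set.univ)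
    (𝓑 : Set (Set Ω)) (hpart : Setoid.IsPartition 𝓑)
    (hinv : ∀ g : G, ∀ B ∈ 𝓑, (fun ω => g • ω) '' B ∈ 𝓑) :
    (∀ B ∈ 𝓑, B ⊆ H0 ∨ B ⊆ H1) ∨
    (∀ B ∈ 𝓑, (B ∩ H0).Nonempty ∧ (B ∩ H1).Nonempty) :=
  blocks_vs_biregular_orbits_general G Ω H H0 H1 ω0 ω1 hH0 hH1 hcover 𝓑 hpart hinv
end

section
/- Let Γ be a finite connected bipartite simple graph with at least one edge and bipartition parts Δ_1 and Δ_2, and let G be a group of automorphisms of Γ that is transitive on the vertices and transitive on the arcs of Γ, where every element of G either fixes both Δ_1 and Δ_2 setwise or swaps them, and some element of G swaps them. Assume every nontrivial normal subgroup of G has at most two orbits on the vertex set. Let G⁺ = {g ∈ G : g(Δ_1) = Δ_1}. If the kernel of the action of G⁺ on Δ_1 is nontrivial, then Γ is complete bipartite: every vertex of Δ_1 is adjacent to every vertex of Δ_2. -/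
/-- Lemma 5.2: let `Γ` be a finite connected bipartite graph with parts `Δ1, Δ2`, and
`G` a group of automorphisms of `Γ`, transitive on vertices and arcs, preserving or
swapping the parts (with some element swapping them), such that every nontrivial normal
subgroup of `G` has at most two orbits on the vertices. If the kernel of the action of
`G⁺ = {g ∈ G : g(Δ1) = Δ1}` on `Δ1` is nontrivial, then `Γ` is complete bipartite. -/
theorem unfaithful_on_part_implies_complete_bipartite
    (V : Type*) [Fintype V] (Γ : SimpleGraph V) (hconn : Γ.Connected)
    (hedge : ∃ u w : V, Γ.Adj u w)
    (Δ1 Δ2 : Set V) (hdisj : Disjoint Δ1 Δ2) (hunion : Δ1 ∪ Δ2 = Set.univ)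
    (hbip : ∀ u w : V, Γ.Adj u w → (u ∈ Δ1 ∧ w ∈ Δ2) ∨ (u ∈ Δ2 ∧ w ∈ Δ1))
    (G : Subgroup (Equiv.Perm V))
    (hauto : ∀ g ∈ G, ∀ u w : V, Γ.Adj (g u) (g w) ↔ Γ.Adj u w)
    (hvtx : ∀ u w : V, ∃ g ∈ G, g u = w)
    (harc : ∀ u w u' w' : V, Γ.Adj u w → Γ.Adj u' w' →
      ∃ g ∈ G, g u = u' ∧ g w = w')
    (hparts : ∀ g ∈ G, (⇑g '' Δ1 = Δ1 ∧ ⇑g '' Δ2 = Δ2) ∨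
      (⇑g '' Δ1 = Δ2 ∧ ⇑g '' Δ2 = Δ1))
    (hswap : ∃ g ∈ G, ⇑g '' Δ1 = Δ2)
    (hbqp : ∀ N : Subgroup G, N.Normal → N ≠ ⊥ →
      Nat.card (MulAction.orbitRel.Quotient N V) ≤ 2)
    (hker : ∃ g ∈ G, g ≠ 1 ∧ ∀ v ∈ Δ1, g v = v) :
    ∀ u ∈ Δ1, ∀ w ∈ Δ2, Γ.Adj u w := by
  classical
  obtain ⟨a, b, hab⟩ := hedge
  -- both parts are nonempty
  have hne1 : Δ1.Nonempty := by
    rcases hbip a b hab with ⟨h1, _⟩ | ⟨_, h1⟩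
    exacts [⟨a, h1⟩, ⟨b, h1⟩]
  have hne2 : Δ2.Nonempty := by
    rcases hbip a b hab with ⟨_, h2⟩ | ⟨h2, _⟩
    exacts [⟨b, h2⟩, ⟨a, h2⟩]
  have hne12 : Δ1 ≠ Δ2 := by
    intro h
    obtain ⟨x, hx⟩ := hne1
    exact Set.disjoint_left.mp hdisj hx (h ▸ hx)
  -- an element fixing Δ1 pointwise preserves both parts setwise
  have hfiximg1 : ∀ g : G, (∀ v ∈ Δ1, (g : Equiv.Perm V) v = v) →
      ⇑(g : Equiv.Perm V) '' Δ1 = Δ1 ∧ ⇑(g : Equiv.Perm V) '' Δ2 = Δ2 := by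
    intro g hg
    have himg : ⇑(g : Equiv.Perm V) '' Δ1 = Δ1 := by
      ext x
      constructor
      · rintro ⟨v, hv, rfl⟩; rw [hg v hv]; exact hv
      · intro hx; exact ⟨x, hx, hg x hx⟩
    rcases hparts (g : Equiv.Perm V) g.2 with h | h
    · exact h
    · exact absurd (himg.symm.trans h.1) hne12
  have hfiximg2 : ∀ g : G, (∀ v ∈ Δ2, (g : Equiv.Perm V) v = v) →
      ⇑(g : Equiv.Perm V) '' Δ1 = Δ1 ∧ ⇑(g : Equiv.Perm V) '' Δ2 = Δ2 := by
    intro g hg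
    have himg : ⇑(g : Equiv.Perm V) '' Δ2 = Δ2 := by
      ext x
      constructor
      · rintro ⟨v, hv, rfl⟩; rw [hg v hv]; exact hv
      · intro hx; exact ⟨x, hx, hg x hx⟩
    rcases hparts (g : Equiv.Perm V) g.2 with h | h
    · exact h
    · exact absurd (himg.symm.trans h.2) hne12.symm
  have hmem_of_img : ∀ g : G, ∀ S : Set V, ⇑(g : Equiv.Perm V) '' S = S →
      ∀ v ∈ S, (g : Equiv.Perm V) v ∈ S := by
    intro g S h v hv
    rw [← h]; exact ⟨v, hv, rfl⟩
  -- commutation of Δ1-fixers and Δ2-fixers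
  have hcomm : ∀ k l : G, (∀ v ∈ Δ1, (k : Equiv.Perm V) v = v) →
      (∀ v ∈ Δ2, (l : Equiv.Perm V) v = v) → k * l = l * k := by
    intro k l hk hl
    ext v
    have hv : v ∈ Δ1 ∪ Δ2 := hunion ▸ Set.mem_univ v
    show (k : Equiv.Perm V) ((l : Equiv.Perm V) v)
        = (l : Equiv.Perm V) ((k : Equiv.Perm V) v)
    rcases hv with hv | hv
    · have hlv : (l : Equiv.Perm V) v ∈ Δ1 :=
        hmem_of_img l Δ1 (hfiximg2 l hl).1 v hv
      rw [hk _ hlv, hk _ hv]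
    · have hkv : (k : Equiv.Perm V) v ∈ Δ2 :=
        hmem_of_img k Δ2 (hfiximg1 k hk).2 v hv
      rw [hl _ hv, hl _ hkv]
  -- the normal subgroup N = K * L
  set P1 : G → Prop := fun g => ∀ v ∈ Δ1, (g : Equiv.Perm V) v = v with hP1
  set P2 : G → Prop := fun g => ∀ v ∈ Δ2, (g : Equiv.Perm V) v = v with hP2
  have hP1one : P1 1 := fun v _ => rfl
  have hP2one : P2 1 := fun v _ => rfl
  have hP1mul : ∀ {x y : G}, P1 x → P1 y → P1 (x * y) := by
    intro x y hx hy v hv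
    show (x : Equiv.Perm V) ((y : Equiv.Perm V) v) = v
    rw [hy v hv, hx v hv]
  have hP2mul : ∀ {x y : G}, P2 x → P2 y → P2 (x * y) := by
    intro x y hx hy v hv
    show (x : Equiv.Perm V) ((y : Equiv.Perm V) v) = v
    rw [hy v hv, hx v hv]
  have hP1inv : ∀ {x : G}, P1 x → P1 x⁻¹ := by
    intro x hx v hv
    have := hx v hv
    show (x : Equiv.Perm V)⁻¹ v = v
    conv_lhs => rw [← this]
    simp
  have hP2inv : ∀ {x : G}, P2 x → P2 x⁻¹ := by
    intro x hx v hv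
    have := hx v hv
    show (x : Equiv.Perm V)⁻¹ v = v
    conv_lhs => rw [← this]
    simp
  let N : Subgroup G :=
    { carrier := {g : G | ∃ k l : G, P1 k ∧ P2 l ∧ g = k * l}
      one_mem' := ⟨1, 1, hP1one, hP2one, (one_mul 1).symm⟩
      mul_mem' := by
        rintro x y ⟨k1, l1, hk1, hl1, rfl⟩ ⟨k2, l2, hk2, hl2, rfl⟩
        refine ⟨k1 * k2, l1 * l2, hP1mul hk1 hk2, hP2mul hl1 hl2, ?_⟩
        have := hcomm k2 l1 hk2 hl1
        calc k1 * l1 * (k2 * l2) = k1 * (l1 * k2) * l2 := by group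
          _ = k1 * (k2 * l1) * l2 := by rw [← this]
          _ = k1 * k2 * (l1 * l2) := by group
      inv_mem' := by
        rintro x ⟨k, l, hk, hl, rfl⟩
        refine ⟨k⁻¹, l⁻¹, hP1inv hk, hP2inv hl, ?_⟩
        rw [mul_inv_rev, ← hcomm k⁻¹ l⁻¹ (hP1inv hk) (hP2inv hl)] }
  -- conjugation sends Δ1-fixers to Δ1-fixers or Δ2-fixers, per the part behaviour
  have hconj : ∀ g x : G, ∀ S T : Set V, ⇑(g : Equiv.Perm V) '' S = T →
      (∀ v ∈ S, (x : Equiv.Perm V) v = v) →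
      (∀ v ∈ T, ((g * x * g⁻¹ : G) : Equiv.Perm V) v = v) := by
    intro g x S T himg hx v hv
    rw [← himg] at hv
    obtain ⟨u, hu, rfl⟩ := hv
    show (g : Equiv.Perm V) ((x : Equiv.Perm V) (((g : Equiv.Perm V))⁻¹
      ((g : Equiv.Perm V) u))) = (g : Equiv.Perm V) u
    rw [Equiv.Perm.inv_def, Equiv.symm_apply_apply, hx u hu]
  have hNnormal : N.Normal := by
    constructor
    rintro n ⟨k, l, hk, hl, rfl⟩ g
    rcases hparts (g : Equiv.Perm V) g.2 with ⟨h1, h2⟩ | ⟨h1, h2⟩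
    · refine ⟨g * k * g⁻¹, g * l * g⁻¹, hconj g k Δ1 Δ1 h1 hk,
        hconj g l Δ2 Δ2 h2 hl, by group⟩
    · refine ⟨g * l * g⁻¹, g * k * g⁻¹, hconj g l Δ2 Δ1 h2 hl,
        hconj g k Δ1 Δ2 h1 hk, ?_⟩
      have := hcomm (g * l * g⁻¹) (g * k * g⁻¹)
        (hconj g l Δ2 Δ1 h2 hl) (hconj g k Δ1 Δ2 h1 hk)
      rw [this]; group
  have hNbot : N ≠ ⊥ := by
    obtain ⟨g0, hg0G, hg0ne, hg0fix⟩ := hker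
    intro hbot
    have hmem : (⟨g0, hg0G⟩ : G) ∈ N :=
      ⟨⟨g0, hg0G⟩, 1, fun v hv => hg0fix v hv, hP2one, (mul_one _).symm⟩
    rw [hbot, Subgroup.mem_bot] at hmem
    exact hg0ne (congrArg Subtype.val hmem)
  have hcard := hbqp N hNnormal hNbot
  -- elements of N preserve the parts
  have hN1 : ∀ n : N, ∀ v ∈ Δ1, ((n : G) : Equiv.Perm V) v ∈ Δ1 := by
    rintro ⟨n, k, l, hk, hl, rfl⟩ v hv
    show ((k : Equiv.Perm V)) ((l : Equiv.Perm V) v) ∈ Δ1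
    have h1 : (l : Equiv.Perm V) v ∈ Δ1 := hmem_of_img l Δ1 (hfiximg2 l hl).1 v hv
    rw [hk _ h1]; exact h1
  have hN2 : ∀ n : N, ∀ v ∈ Δ2, ((n : G) : Equiv.Perm V) v ∈ Δ2 := by
    rintro ⟨n, k, l, hk, hl, rfl⟩ v hv
    show ((k : Equiv.Perm V)) ((l : Equiv.Perm V) v) ∈ Δ2
    rw [hl _ hv]
    exact hmem_of_img k Δ2 (hfiximg1 k hk).2 v hv
  have hsmul : ∀ (n : N) (v : V), n • v = ((n : G) : Equiv.Perm V) v := by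
    intro n v; rfl
  -- orbit classes of Δ1 and Δ2 points differ
  let q : V → MulAction.orbitRel.Quotient N V := Quotient.mk''
  have hqne : ∀ x ∈ Δ1, ∀ y ∈ Δ2, q x ≠ q y := by
    intro x hx y hy h
    have : x ∈ MulAction.orbit N y := Quotient.eq''.mp h
    obtain ⟨n, hn⟩ := this
    have hn' : ((n : G) : Equiv.Perm V) y = x := by rw [← hsmul]; exact hn
    have : x ∈ Δ2 := hn' ▸ hN2 n y hy
    exact Set.disjoint_left.mp hdisj hx this
  have hfinq : Finite (MulAction.orbitRel.Quotient N V) := Quotient.finite _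
  -- any two Δ2 points lie in the same N-orbit
  have hsameorbit : ∀ x ∈ Δ2, ∀ y ∈ Δ2, ∃ n : N, ((n : G) : Equiv.Perm V) x = y := by
    intro x hx y hy
    obtain ⟨u1, hu1⟩ := hne1
    have hqq : q x = q y := by
      by_contra hne
      have hinj : Function.Injective ![q u1, q x, q y] := by
        intro i j hij
        fin_cases i <;> fin_cases j <;>
          first
          | rfl
          | (exfalso; simp only [Matrix.cons_val_zero, Matrix.cons_val_one,
              Matrix.head_cons, Matrix.cons_val_two, Matrix.tail_cons] at hij;
             first
             | exact hqne u1 hu1 x hx hij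
             | exact hqne u1 hu1 y hy hij
             | exact hqne u1 hu1 x hx hij.symm
             | exact hqne u1 hu1 y hy hij.symm
             | exact hne hij
             | exact hne hij.symm)
      have h3 : Nat.card (Fin 3) ≤ Nat.card (MulAction.orbitRel.Quotient N V) :=
        Nat.card_le_card_of_injective _ hinj
      rw [Nat.card_eq_fintype_card (α := Fin 3), Fintype.card_fin] at h3
      omega
    have : y ∈ MulAction.orbit N x := (Quotient.eq''.mp hqq.symm)
    obtain ⟨n, hn⟩ := this
    exact ⟨n, by rw [← hsmul]; exact hn⟩
  -- conclude
  intro u hu w hw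
  obtain ⟨g, hgG, hga⟩ := hvtx a u
  have hadj : Γ.Adj u (g b) := by
    rw [← hga]; exact (hauto g hgG a b).mpr hab
  have hgb2 : g b ∈ Δ2 := by
    rcases hbip u (g b) hadj with ⟨_, h⟩ | ⟨h, _⟩
    · exact h
    · exact absurd hu (Set.disjoint_right.mp hdisj h)
  obtain ⟨n, hn⟩ := hsameorbit (g b) hgb2 w hw
  obtain ⟨nv, k, l, hk, hl, hkl⟩ := n
  have hkeq : ((k : Equiv.Perm V)) (g b) = w := by
    have : ((nv : G) : Equiv.Perm V) (g b) = w := hn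
    rw [hkl] at this
    have hfix : (l : Equiv.Perm V) (g b) = g b := hl _ hgb2
    calc (k : Equiv.Perm V) (g b) = (k : Equiv.Perm V) ((l : Equiv.Perm V) (g b)) := by
          rw [hfix]
      _ = w := this
  have hku : ((k : Equiv.Perm V)) u = u := hk u hu
  have := (hauto (k : Equiv.Perm V) k.2 u (g b)).mpr hadj
  rwa [hku, hkeq] at this
end

section
/- Let F be a field, d ≥ 1, and let ι be the automorphism of GL_d(F) given by ι(g) = (gᵀ)⁻¹ (inverse-transpose); ι has order dividing 2, so one can form the semidirect product G = GL_d(F) ⋊ Z/2Z in which the nontrivial element of Z/2Z acts by ι. Suppose x, y ∈ GL_d(F) with y symmetric (yᵀ = y) and y⁻¹xy = xᵀ. Then the element σ = (y, 1) of G satisfies σ ≠ 1, σ² = 1, and σ⁻¹(x,0)σ = (x⁻¹, 0). Consequently, if x has finite order m ≥ 3, the subgroup of G generated by (x,0) and σ is isomorphic to the dihedral group of order 2m. -/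
/-!
Inverse-transpose satisfies `ι(y) = y⁻¹` for symmetric `y`, and `y⁻¹ x y = xᵀ` gives
`ι(x) = y⁻¹ x⁻¹ y`. Hence in the semidirect product `σ = (y, 1)` squares to `(y ι(y), 0) = 1`
and conjugates `(x, 0)` to `(y ι(x) ι(y), 0) = (x⁻¹, 0)`. An element `a` of order `m` and an
involution `σ ∉ ⟨a⟩` inverting `a` satisfy the defining relations of `D_{2m}`, so
`r i ↦ aⁱ, sr i ↦ σ aⁱ` is an injective homomorphism onto `⟨a, σ⟩`.
-/

open scoped Matrix

theorem pow_mod_of_pow_eq_one {M : Type*} [Monoid M] {n : ℕ} {a : M} (ha : a ^ n = 1)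
    (k : ℕ) : a ^ (k % n) = a ^ k := by
  conv_rhs => rw [← Nat.mod_add_div k n, pow_add, pow_mul, ha, one_pow, mul_one]

theorem pow_val_add_of_pow_eq_one {M : Type*} [Monoid M] {n : ℕ} [NeZero n] {a : M}
    (ha : a ^ n = 1) (i j : ZMod n) : a ^ (i + j).val = a ^ i.val * a ^ j.val := by
  rw [ZMod.val_add, pow_mod_of_pow_eq_one ha, pow_add]

namespace DihedralGroup

variable {G : Type*} [Group G] {n : ℕ} [NeZero n] {a s : G}

theorem inv_mul_pow_mul_eq_inv_pow (hsa : s⁻¹ * a * s = a⁻¹) (k : ℕ) :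
    s⁻¹ * a ^ k * s = (a ^ k)⁻¹ := by
  simpa only [inv_inv, inv_pow, hsa] using (conj_pow (a := s⁻¹) (b := a) (i := k)).symm

theorem pow_val_sub_of_pow_eq_one (ha : a ^ n = 1) (i j : ZMod n) :
    a ^ (j - i).val = (a ^ i.val)⁻¹ * a ^ j.val := by
  rw [eq_inv_mul_iff_mul_eq, ← pow_val_add_of_pow_eq_one ha, add_sub_cancel]

def lift (ha : a ^ n = 1) (hs : s ^ 2 = 1) (hsa : s⁻¹ * a * s = a⁻¹) :
    DihedralGroup n →* G :=
  have hs' : s⁻¹ = s := inv_eq_of_mul_eq_one_right (by rwa [← sq])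
  have hswap (k : ℕ) : a ^ k * s = s * (a ^ k)⁻¹ := by
    rw [← inv_mul_pow_mul_eq_inv_pow hsa]; group
  MonoidHom.mk' (fun | r i => a ^ i.val | sr i => s * a ^ i.val) <| by
    rintro (i | i) (j | j)
    · exact pow_val_add_of_pow_eq_one ha i j
    · show s * a ^ (j - i).val = a ^ i.val * (s * a ^ j.val)
      rw [pow_val_sub_of_pow_eq_one ha, ← mul_assoc (a ^ i.val), hswap, mul_assoc]
    · show s * a ^ (i + j).val = s * a ^ i.val * a ^ j.val
      rw [pow_val_add_of_pow_eq_one ha, mul_assoc]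
    · show a ^ (j - i).val = s * a ^ i.val * (s * a ^ j.val)
      rw [pow_val_sub_of_pow_eq_one ha, ← inv_mul_pow_mul_eq_inv_pow hsa, hs', mul_assoc]

section lift

variable (ha : a ^ n = 1) (hs : s ^ 2 = 1) (hsa : s⁻¹ * a * s = a⁻¹)

@[simp] theorem lift_r (i : ZMod n) : lift ha hs hsa (r i) = a ^ i.val := rfl

@[simp] theorem lift_sr (i : ZMod n) : lift ha hs hsa (sr i) = s * a ^ i.val := rfl

theorem lift_injective (hord : orderOf a = n) (hs_notMem : s ∉ Subgroup.zpowers a) :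
    Function.Injective (lift ha hs hsa) := by
  refine (injective_iff_map_eq_one _).mpr ?_
  rintro (i | i) h
  · have hi : i.val = 0 := by
      by_contra hi
      exact pow_ne_one_of_lt_orderOf hi (i.val_lt.trans_eq hord.symm) h
    rw [(ZMod.val_eq_zero i).mp hi, r_zero]
  · rw [lift_sr, mul_eq_one_iff_eq_inv] at h
    exact absurd (h ▸ inv_mem (Subgroup.npow_mem_zpowers a i.val)) hs_notMem

theorem range_lift : (lift ha hs hsa).range = Subgroup.closure {a, s} := by
  have ha_mem : a ∈ Subgroup.closure {a, s} := Subgroup.subset_closure (by simp)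
  have hs_mem : s ∈ Subgroup.closure {a, s} := Subgroup.subset_closure (by simp)
  refine le_antisymm ?_ ((Subgroup.closure_le _).mpr ?_)
  · rintro _ ⟨i | i, rfl⟩
    exacts [pow_mem ha_mem _, mul_mem hs_mem (pow_mem ha_mem _)]
  · rintro _ (rfl | rfl)
    · exact ⟨r 1, by rw [lift_r, ZMod.val_one_eq_one_mod, pow_mod_of_pow_eq_one ha, pow_one]⟩
    · exact ⟨sr 0, by rw [lift_sr, ZMod.val_zero, pow_zero, mul_one]⟩

end lift

theorem nonempty_closure_mulEquiv (hord : orderOf a = n) (hs : s ^ 2 = 1)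
    (hsa : s⁻¹ * a * s = a⁻¹) (hs_notMem : s ∉ Subgroup.zpowers a) :
    Nonempty (Subgroup.closure {a, s} ≃* DihedralGroup n) :=
  have ha : a ^ n = 1 := hord ▸ pow_orderOf_eq_one a
  ⟨(MulEquiv.subgroupCongr (range_lift ha hs hsa).symm).trans
    (MonoidHom.ofInjective (lift_injective ha hs hsa hord hs_notMem)).symm⟩

end DihedralGroup

namespace SemidirectProduct

variable {N H : Type*} [Group N] [Group H] {φ : H →* MulAut N} {t : H} {y : N}

theorem mk_sq_eq_one (ht : t ^ 2 = 1) (hy : φ t y = y⁻¹) : (⟨y, t⟩ : N ⋊[φ] H) ^ 2 = 1 := by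
  rw [sq]
  ext
  · show y * φ t y = 1
    rw [hy, mul_inv_cancel]
  · show t * t = 1
    rw [← sq, ht]

theorem inv_mk_mul_inl_mul_mk (ht : t ^ 2 = 1) (hy : φ t y = y⁻¹) {x : N}
    (hx : φ t x = y⁻¹ * x⁻¹ * y) :
    (⟨y, t⟩ : N ⋊[φ] H)⁻¹ * inl x * ⟨y, t⟩ = (inl x)⁻¹ := by
  rw [inv_eq_of_mul_eq_one_right (by rw [← sq, mk_sq_eq_one ht hy]), ← map_inv]
  ext
  · show y * φ t x * φ (t * 1) y = x⁻¹
    rw [mul_one, hx, hy]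
    group
  · show t * 1 * t = 1
    rw [mul_one, ← sq, ht]

theorem mk_notMem_zpowers_inl (ht : t ≠ 1) (x : N) :
    (⟨y, t⟩ : N ⋊[φ] H) ∉ Subgroup.zpowers (inl x) := by
  have hle : Subgroup.zpowers (inl x) ≤ (rightHom : N ⋊[φ] H →* H).ker := by
    rw [Subgroup.zpowers_le, ← range_inl_eq_ker_rightHom]
    exact ⟨x, rfl⟩
  exact fun h => ht (hle h)

end SemidirectProduct

theorem Matrix.GeneralLinearGroup.coe_inv_transpose_eq_coe_inv {n R : Type*} [Fintype n]
    [DecidableEq n] [CommRing R] {g h : GL n R} (hgh : (h : Matrix n n R) = (g : Matrix n n R)ᵀ) :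
    ((g⁻¹ : GL n R) : Matrix n n R)ᵀ = ((h⁻¹ : GL n R) : Matrix n n R) := by
  rw [Matrix.coe_units_inv, Matrix.coe_units_inv, hgh, Matrix.transpose_nonsing_inv]

open SemidirectProduct Matrix.GeneralLinearGroup in
theorem singer_and_inverse_transpose_generate_dihedral_general
    (F : Type*) [Field F] (d : ℕ)
    (φ : Multiplicative (ZMod 2) →* MulAut (Matrix.GeneralLinearGroup (Fin d) F))
    (hφ : ∀ g : Matrix.GeneralLinearGroup (Fin d) F,
      ((φ (Multiplicative.ofAdd 1) g : Matrix.GeneralLinearGroup (Fin d) F) :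
          Matrix (Fin d) (Fin d) F) =
        ((g⁻¹ : Matrix.GeneralLinearGroup (Fin d) F) : Matrix (Fin d) (Fin d) F)ᵀ)
    (x y : Matrix.GeneralLinearGroup (Fin d) F)
    (hy : ((y : Matrix (Fin d) (Fin d) F))ᵀ = (y : Matrix (Fin d) (Fin d) F))
    (hxy : ((y⁻¹ * x * y : Matrix.GeneralLinearGroup (Fin d) F) :
        Matrix (Fin d) (Fin d) F) = ((x : Matrix (Fin d) (Fin d) F))ᵀ) :
    (⟨y, Multiplicative.ofAdd 1⟩ :
        Matrix.GeneralLinearGroup (Fin d) F ⋊[φ] Multiplicative (ZMod 2)) ≠ 1 ∧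
    (⟨y, Multiplicative.ofAdd 1⟩ :
        Matrix.GeneralLinearGroup (Fin d) F ⋊[φ] Multiplicative (ZMod 2)) ^ 2 = 1 ∧
    (⟨y, Multiplicative.ofAdd 1⟩ :
          Matrix.GeneralLinearGroup (Fin d) F ⋊[φ] Multiplicative (ZMod 2))⁻¹ *
        ⟨x, Multiplicative.ofAdd 0⟩ *
        ⟨y, Multiplicative.ofAdd 1⟩ = ⟨x⁻¹, Multiplicative.ofAdd 0⟩ ∧
    (∀ m : ℕ, orderOf x = m → 3 ≤ m →
      Nonempty
        (↥(Subgroup.closure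
            {(⟨x, Multiplicative.ofAdd 0⟩ :
                Matrix.GeneralLinearGroup (Fin d) F ⋊[φ] Multiplicative (ZMod 2)),
             ⟨y, Multiplicative.ofAdd 1⟩}) ≃* DihedralGroup m)) := by
  have ht_sq : (Multiplicative.ofAdd 1 : Multiplicative (ZMod 2)) ^ 2 = 1 := by decide
  have ht_ne : (Multiplicative.ofAdd 1 : Multiplicative (ZMod 2)) ≠ 1 := by decide
  have hφy : φ (Multiplicative.ofAdd 1) y = y⁻¹ :=
    Units.ext <| (hφ y).trans (coe_inv_transpose_eq_coe_inv hy.symm)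
  have hφx : φ (Multiplicative.ofAdd 1) x = y⁻¹ * x⁻¹ * y :=
    Units.ext <| (hφ x).trans <| (coe_inv_transpose_eq_coe_inv hxy).trans <| by group
  have hσ := mk_sq_eq_one ht_sq hφy
  have hconj := inv_mk_mul_inl_mul_mk ht_sq hφy hφx
  refine ⟨fun h => ht_ne (congrArg right h), hσ, hconj.trans (map_inv inl x).symm,
    fun m hm h3m => ?_⟩
  have : NeZero m := ⟨by omega⟩
  exact DihedralGroup.nonempty_closure_mulEquiv ((orderOf_injective inl inl_injective x).trans hm)
    hσ hconj (mk_notMem_zpowers_inl ht_ne x)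

/-- Let `ι` be the inverse-transpose automorphism of `GL_d(F)` and form the semidirect
product `G = GL_d(F) ⋊ ℤ/2ℤ` where the nontrivial element of `ℤ/2ℤ` acts by `ι`
(encoded by the hypothesis on `φ`). If `y` is symmetric and `y⁻¹xy = xᵀ`, then
`σ = (y, 1)` satisfies `σ ≠ 1`, `σ² = 1` and `σ⁻¹(x,0)σ = (x⁻¹,0)`; consequently, if
`x` has finite order `m ≥ 3`, then `⟨(x,0), σ⟩ ≅ D_{2m}`. -/
theorem singer_and_inverse_transpose_generate_dihedral
    (F : Type*) [Field F] (d : ℕ) (hd : 1 ≤ d)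
    (φ : Multiplicative (ZMod 2) →* MulAut (Matrix.GeneralLinearGroup (Fin d) F))
    (hφ : ∀ g : Matrix.GeneralLinearGroup (Fin d) F,
      ((φ (Multiplicative.ofAdd 1) g : Matrix.GeneralLinearGroup (Fin d) F) :
          Matrix (Fin d) (Fin d) F) =
        ((g⁻¹ : Matrix.GeneralLinearGroup (Fin d) F) : Matrix (Fin d) (Fin d) F)ᵀ)
    (x y : Matrix.GeneralLinearGroup (Fin d) F)
    (hy : ((y : Matrix (Fin d) (Fin d) F))ᵀ = (y : Matrix (Fin d) (Fin d) F))
    (hxy : ((y⁻¹ * x * y : Matrix.GeneralLinearGroup (Fin d) F) :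
        Matrix (Fin d) (Fin d) F) = ((x : Matrix (Fin d) (Fin d) F))ᵀ) :
    (⟨y, Multiplicative.ofAdd 1⟩ :
        Matrix.GeneralLinearGroup (Fin d) F ⋊[φ] Multiplicative (ZMod 2)) ≠ 1 ∧
    (⟨y, Multiplicative.ofAdd 1⟩ :
        Matrix.GeneralLinearGroup (Fin d) F ⋊[φ] Multiplicative (ZMod 2)) ^ 2 = 1 ∧
    (⟨y, Multiplicative.ofAdd 1⟩ :
          Matrix.GeneralLinearGroup (Fin d) F ⋊[φ] Multiplicative (ZMod 2))⁻¹ *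
        ⟨x, Multiplicative.ofAdd 0⟩ *
        ⟨y, Multiplicative.ofAdd 1⟩ = ⟨x⁻¹, Multiplicative.ofAdd 0⟩ ∧
    (∀ m : ℕ, orderOf x = m → 3 ≤ m →
      Nonempty
        (↥(Subgroup.closure
            {(⟨x, Multiplicative.ofAdd 0⟩ :
                Matrix.GeneralLinearGroup (Fin d) F ⋊[φ] Multiplicative (ZMod 2)),
             ⟨y, Multiplicative.ofAdd 1⟩}) ≃* DihedralGroup m)) :=
  singer_and_inverse_transpose_generate_dihedral_general F d φ hφ x y hy hxy
end

section
/- Let p be an odd prime, e ≥ 1, and q = p^e with q ≡ 5 (mod 8). Let G = PSL(2, F_q), let K ≤ G be any subgroup of order q(q−1)/4, and let H ≤ G be any subgroup isomorphic to the dihedral group of order q+1. Then H ∩ g K g⁻¹ = 1 for every g ∈ G; consequently H acts semiregularly on the coset space G/K and has exactly two orbits on G/K. -/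
open Matrix MulAction

section PSL2Aux

private lemma PSL2_arith (q S P m k n : ℕ) (hq : 5 ≤ q) (hk : 0 < k)
    (hA : (q - 1) * S = (q ^ 2 - 1) * (q ^ 2 - q)) (hB : S = P * 2) (hC : P = m * k)
    (hD : 4 * k = q * (q - 1)) (hE : m = n * (q + 1)) : n = 2 := by
  obtain ⟨c, rfl⟩ : ∃ c, q = c + 1 := ⟨q - 1, by omega⟩
  have hc1 : c + 1 - 1 = c := by omega
  have h1 : (c + 1) ^ 2 - 1 = (c + 2) * c :=
    (Nat.sub_eq_iff_eq_add (Nat.one_le_pow _ _ (by omega))).mpr (by ring)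
  have h2 : (c + 1) ^ 2 - (c + 1) = (c + 1) * c :=
    (Nat.sub_eq_iff_eq_add (Nat.le_self_pow two_ne_zero _)).mpr (by ring)
  rw [hc1] at hA hD
  rw [h1, h2] at hA
  have hS : S = (c + 2) * ((c + 1) * c) :=
    Nat.eq_of_mul_eq_mul_left (show 0 < c by omega) (by rw [hA]; ring)
  have h2nt : (2 * n) * ((c + 2) * k) = 4 * ((c + 2) * k) := by
    have hL : (2 * n) * ((c + 2) * k) = S := by rw [hB, hC, hE]; ring
    have hR : 4 * ((c + 2) * k) = S := by rw [hS, ← hD]; ring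
    rw [hL, hR]
  have := Nat.eq_of_mul_eq_mul_right (Nat.mul_pos (show 0 < c + 2 by omega) hk) h2nt
  omega

private lemma PSL2_det_surj {F : Type*} [Field F] [Fintype F] :
    Function.Surjective (Matrix.GeneralLinearGroup.det : GL (Fin 2) F →* Fˣ) := by
  intro u
  refine ⟨⟨diagonal ![(u : F), 1], diagonal ![((u⁻¹ : Fˣ) : F), 1], ?_, ?_⟩, ?_⟩
  · rw [diagonal_mul_diagonal]
    ext i j
    fin_cases i <;> fin_cases j <;> simp [diagonal]
  · rw [diagonal_mul_diagonal]
    ext i j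
    fin_cases i <;> fin_cases j <;> simp [diagonal]
  · ext
    simp [Matrix.GeneralLinearGroup.val_det_apply, det_diagonal, Fin.prod_univ_two]

private noncomputable def PSL2_slEquivKer (F : Type*) [Field F] [Fintype F] :
    SpecialLinearGroup (Fin 2) F ≃
      (MonoidHom.ker (Matrix.GeneralLinearGroup.det : GL (Fin 2) F →* Fˣ)) where
  toFun A := ⟨SpecialLinearGroup.toGL A, by simp [MonoidHom.mem_ker]⟩
  invFun B := ⟨(B : GL (Fin 2) F).val, by
    have h := B.2
    rw [MonoidHom.mem_ker] at h
    have := congrArg Units.val h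
    rwa [Matrix.GeneralLinearGroup.val_det_apply] at this⟩
  left_inv A := Subtype.ext rfl
  right_inv B := Subtype.ext (Units.ext rfl)

private lemma PSL2_card_SL {F : Type*} [Field F] [Fintype F] :
    (Fintype.card F - 1) * Nat.card (SpecialLinearGroup (Fin 2) F)
      = (Fintype.card F ^ 2 - 1) * (Fintype.card F ^ 2 - Fintype.card F) := by
  have hGL := Matrix.card_GL_field (𝔽 := F) (n := 2)
  rw [Fin.prod_univ_two] at hGL
  simp only [Fin.val_zero, pow_zero, Fin.val_one, pow_one] at hGL
  have h1 := Subgroup.card_eq_card_quotient_mul_card_subgroup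
    (MonoidHom.ker (Matrix.GeneralLinearGroup.det : GL (Fin 2) F →* Fˣ))
  have e1 := QuotientGroup.quotientKerEquivOfSurjective _ (PSL2_det_surj (F := F))
  have h2 : Nat.card (GL (Fin 2) F ⧸
      MonoidHom.ker (Matrix.GeneralLinearGroup.det : GL (Fin 2) F →* Fˣ))
      = Fintype.card F - 1 := by
    rw [Nat.card_congr e1.toEquiv, Nat.card_units, Nat.card_eq_fintype_card]
  have h3 : Nat.card (MonoidHom.ker (Matrix.GeneralLinearGroup.det : GL (Fin 2) F →* Fˣ))
      = Nat.card (SpecialLinearGroup (Fin 2) F) :=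
    (Nat.card_congr (PSL2_slEquivKer F)).symm
  rw [h1, h2, h3] at hGL
  rw [hGL]

private lemma PSL2_card_center {F : Type*} [Field F] [Fintype F] (h2 : ringChar F ≠ 2) :
    Nat.card (Subgroup.center (SpecialLinearGroup (Fin 2) F)) = 2 := by
  have hdet : ((-1 : Matrix (Fin 2) (Fin 2) F)).det = 1 := by
    rw [show (-1 : Matrix (Fin 2) (Fin 2) F) = -(1 : Matrix (Fin 2) (Fin 2) F) from rfl, det_neg]
    simp
  set z : SpecialLinearGroup (Fin 2) F := ⟨-1, hdet⟩ with hz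
  have hne : (1 : SpecialLinearGroup (Fin 2) F) ≠ z := by
    intro h
    replace h := congrArg (fun M : SpecialLinearGroup (Fin 2) F => (M : Matrix (Fin 2) (Fin 2) F) 0 0) h
    simp [hz, Matrix.one_apply] at h
    exact Ring.neg_one_ne_one_of_char_ne_two h2 h.symm
  have hset : ((Subgroup.center (SpecialLinearGroup (Fin 2) F)) : Set _) = {1, z} := by
    ext A
    simp only [SetLike.mem_coe, Matrix.SpecialLinearGroup.mem_center_iff, Fintype.card_fin,
      Set.mem_insert_iff, Set.mem_singleton_iff]
    constructor
    · rintro ⟨r, hr, hA⟩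
      have hr' : r * r = 1 := by rw [← pow_two]; exact hr
      rcases mul_self_eq_one_iff.mp hr' with rfl | rfl
      · left
        apply Subtype.ext
        rw [← hA]
        simp
      · right
        apply Subtype.ext
        rw [← hA, hz]
        show scalar (Fin 2) (-1) = -1
        rw [_root_.map_neg, _root_.map_one]
    · rintro (rfl | rfl)
      · exact ⟨1, one_pow 2, by simp⟩
      · refine ⟨-1, by norm_num, ?_⟩
        rw [hz]
        show scalar (Fin 2) (-1) = (⟨-1, hdet⟩ : SpecialLinearGroup (Fin 2) F).val
        rw [_root_.map_neg, _root_.map_one]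
  have hcc : Nat.card (Subgroup.center (SpecialLinearGroup (Fin 2) F))
      = Nat.card ({1, z} : Set (SpecialLinearGroup (Fin 2) F)) :=
    Nat.card_congr (Equiv.setCongr hset)
  rw [hcc, Nat.card_coe_set_eq, Set.ncard_pair hne]

end PSL2Aux

/-- Let `q = p^e ≡ 5 (mod 8)` with `p` an odd prime, `G = PSL(2, F_q)`, `K ≤ G` of order
`q(q-1)/4` and `H ≤ G` isomorphic to the dihedral group of order `q + 1`. Then
`H ∩ gKg⁻¹ = 1` for every `g ∈ G`; consequently `H` acts semiregularly on `G/K` with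
exactly two orbits. -/
theorem dihedral_meets_conjugates_trivially_in_PSL2
    (p e : ℕ) (hp : p.Prime) (hodd : Odd p) (he : 1 ≤ e)
    (F : Type*) [Field F] [Fintype F] (hcard : Fintype.card F = p ^ e)
    (h5 : p ^ e % 8 = 5)
    (K : Subgroup (Matrix.ProjectiveSpecialLinearGroup (Fin 2) F))
    (hK : Nat.card K = p ^ e * (p ^ e - 1) / 4)
    (H : Subgroup (Matrix.ProjectiveSpecialLinearGroup (Fin 2) F))
    (hH : Nonempty (H ≃* DihedralGroup ((p ^ e + 1) / 2))) :
    (∀ g : Matrix.ProjectiveSpecialLinearGroup (Fin 2) F,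
      H ⊓ Subgroup.map (MulAut.conj g).toMonoidHom K = ⊥) ∧
    (∀ h : H, ∀ ω : Matrix.ProjectiveSpecialLinearGroup (Fin 2) F ⧸ K,
      (h : Matrix.ProjectiveSpecialLinearGroup (Fin 2) F) • ω = ω → h = 1) ∧
    Nat.card (MulAction.orbitRel.Quotient H
      (Matrix.ProjectiveSpecialLinearGroup (Fin 2) F ⧸ K)) = 2 := by
  set q : ℕ := p ^ e with hqdef
  set PSL := Matrix.ProjectiveSpecialLinearGroup (Fin 2) F with hPSL
  have hq5 : q % 8 = 5 := h5
  have hqge : 5 ≤ q := by omega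
  -- characteristic is odd
  have hchar : ringChar F ≠ 2 := by
    intro hch
    haveI : CharP F 2 := hch ▸ ringChar.charP F
    obtain ⟨n, -, hcard2⟩ := FiniteField.card F 2
    rw [hcard] at hcard2
    have hpdvd : p ∣ 2 ^ (n : ℕ) := hcard2 ▸ dvd_pow_self p (by omega)
    have hp2 : p = 2 :=
      (Nat.prime_dvd_prime_iff_eq hp Nat.prime_two).mp (hp.dvd_of_dvd_pow hpdvd)
    rcases hodd with ⟨m, hm⟩
    omega
  -- cardinality of H
  have cardH : Nat.card H = q + 1 := by
    obtain ⟨eq⟩ := hH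
    rw [Nat.card_congr eq.toEquiv, DihedralGroup.nat_card]
    omega
  -- 4 divides q - 1, k = q * t with t odd
  obtain ⟨t, ht⟩ : ∃ t, q - 1 = 4 * t := ⟨(q - 1) / 4, by omega⟩
  have htodd : t % 2 = 1 := by omega
  have hkqt : Nat.card K = q * t := by
    rw [hK, show p ^ e * (p ^ e - 1) = 4 * (q * t) by rw [← hqdef, ht]; ring]
    exact Nat.mul_div_cancel_left _ (by norm_num)
  have hkpos : 0 < Nat.card K := Nat.card_pos
  have hD : 4 * Nat.card K = q * (q - 1) := by rw [hkqt, ht]; ring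
  -- coprimality
  have hcop : Nat.Coprime (q + 1) (Nat.card K) := by
    rw [hkqt]
    refine Nat.Coprime.mul_right ?_ ?_
    · simpa using Nat.coprime_succ_self (n := q)
    · have hd1 : Nat.gcd (q + 1) t ∣ q + 1 := Nat.gcd_dvd_left _ _
      have hd2 : Nat.gcd (q + 1) t ∣ t := Nat.gcd_dvd_right _ _
      have hdq1 : Nat.gcd (q + 1) t ∣ q - 1 := hd2.trans ⟨4, by omega⟩
      have h2dvd : Nat.gcd (q + 1) t ∣ 2 := by
        have hsub := Nat.dvd_sub hd1 hdq1
        rwa [show q + 1 - (q - 1) = 2 by omega] at hsub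
      rcases (Nat.dvd_prime Nat.prime_two).mp h2dvd with h | h
      · exact h
      · exfalso
        obtain ⟨c, hc⟩ := hd2
        rw [h] at hc
        omega
  -- Part 1
  have part1 : ∀ g : PSL, H ⊓ Subgroup.map (MulAut.conj g).toMonoidHom K = ⊥ := by
    intro g
    apply Subgroup.card_eq_one.mp
    have d1 : Nat.card (H ⊓ Subgroup.map (MulAut.conj g).toMonoidHom K : Subgroup PSL)
        ∣ q + 1 := cardH ▸ Subgroup.card_dvd_of_le inf_le_left
    have cmap : Nat.card (Subgroup.map (MulAut.conj g).toMonoidHom K) = Nat.card K :=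
      (Nat.card_congr (Subgroup.equivMapOfInjective K (MulAut.conj g).toMonoidHom
        (MulAut.conj g).injective).toEquiv).symm
    have d2 : Nat.card (H ⊓ Subgroup.map (MulAut.conj g).toMonoidHom K : Subgroup PSL)
        ∣ Nat.card K := cmap ▸ Subgroup.card_dvd_of_le inf_le_right
    have := Nat.dvd_gcd d1 d2
    rwa [Nat.Coprime.gcd_eq_one hcop, Nat.dvd_one] at this
  -- Part 2
  have part2 : ∀ h : H, ∀ ω : PSL ⧸ K, (h : PSL) • ω = ω → h = 1 := by
    intro h ω hfix
    obtain ⟨x, rfl⟩ := QuotientGroup.mk_surjective ω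
    rw [MulAction.Quotient.smul_mk, QuotientGroup.eq] at hfix
    have hmem : (h : PSL)⁻¹ ∈ H ⊓ Subgroup.map (MulAut.conj x).toMonoidHom K := by
      refine ⟨H.inv_mem h.2, ⟨((h : PSL) • x)⁻¹ * x, hfix, ?_⟩⟩
      show x * ((((h : PSL) : PSL) • x)⁻¹ * x) * x⁻¹ = ((h : PSL))⁻¹
      rw [smul_eq_mul, _root_.mul_inv_rev]
      group
    rw [part1 x, Subgroup.mem_bot, inv_eq_one] at hmem
    exact Subtype.ext hmem
  refine ⟨part1, part2, ?_⟩
  -- Part 3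
  have hstab : ∀ x : PSL ⧸ K, stabilizer H x = ⊥ := by
    intro x
    ext h
    simp only [mem_stabilizer_iff, Subgroup.mem_bot]
    constructor
    · intro hh
      exact part2 h x hh
    · rintro rfl
      exact one_smul _ _
  have e3 : (PSL ⧸ K) ≃ (MulAction.orbitRel.Quotient H (PSL ⧸ K)) × H :=
    (MulAction.selfEquivSigmaOrbitsQuotientStabilizer H (PSL ⧸ K)).trans <|
      (Equiv.sigmaCongrRight fun ω =>
        ((Subgroup.quotientEquivOfEq (hstab _)).trans
          (QuotientGroup.quotientBot (G := H)).toEquiv)).trans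
        (Equiv.sigmaEquivProd _ _)
  have hE : Nat.card (PSL ⧸ K)
      = Nat.card (MulAction.orbitRel.Quotient H (PSL ⧸ K)) * (q + 1) := by
    rw [Nat.card_congr e3, Nat.card_prod, cardH]
  -- assemble cardinalities
  have hA : (q - 1) * Nat.card (SpecialLinearGroup (Fin 2) F)
      = (q ^ 2 - 1) * (q ^ 2 - q) := by
    have := PSL2_card_SL (F := F)
    rwa [hcard] at this
  have hB : Nat.card (SpecialLinearGroup (Fin 2) F) = Nat.card PSL * 2 := by
    have := Subgroup.card_eq_card_quotient_mul_card_subgroup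
      (Subgroup.center (SpecialLinearGroup (Fin 2) F))
    rwa [PSL2_card_center hchar] at this
  have hC : Nat.card PSL = Nat.card (PSL ⧸ K) * Nat.card K :=
    Subgroup.card_eq_card_quotient_mul_card_subgroup K
  exact PSL2_arith q (Nat.card (SpecialLinearGroup (Fin 2) F))
    (Nat.card PSL) (Nat.card (PSL ⧸ K)) (Nat.card K)
    (Nat.card (MulAction.orbitRel.Quotient H (PSL ⧸ K)))
    hqge hkpos hA hB hC hD hE
end

section
/- Let q be an odd prime power and n ≥ 2 an integer. The affine group AGL_n(q) = F_q^n ⋊ GL_n(F_q) (the semidirect product of the translation group by GL_n(F_q) with its natural action, i.e., the group of invertible affine transformations of F_q^n) has exactly one subgroup of index 2. -/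
open Matrix Subgroup

section MatrixPart
variable {F : Type*} [Field F] {n : ℕ}

-- closure of squares is mapped into closure of squares by monoid homs
lemma AGLaux.map_mem_closure_squares {G₁ G₂ : Type*} [Group G₁] [Group G₂] (f : G₁ →* G₂)
    {x : G₁} (hx : x ∈ Subgroup.closure {y : G₁ | IsSquare y}) :
    f x ∈ Subgroup.closure {y : G₂ | IsSquare y} := by
  induction hx using Subgroup.closure_induction with
  | mem y hy => exact Subgroup.subset_closure (hy.map f)
  | one => rw [_root_.map_one]; exact one_mem _
  | mul a b _ _ ha hb => rw [_root_.map_mul]; exact mul_mem ha hb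
  | inv a _ ha => rw [_root_.map_inv]; exact inv_mem ha

namespace AGLaux

def swapSq (i j : Fin n) (a : F) : Matrix (Fin n) (Fin n) F :=
  Matrix.diagonal (fun k => if k = i ∨ k = j then 0 else 1)
    + Matrix.single i j a + Matrix.single j i 1

lemma diagonal_mul_stdBasisMatrix (d : Fin n → F) (i j : Fin n) (a : F) :
    Matrix.diagonal d * Matrix.single i j a = Matrix.single i j (d i * a) := by
  ext k l
  rw [Matrix.diagonal_mul]
  by_cases h : i = k ∧ j = l
  · obtain ⟨rfl, rfl⟩ := h; simp
  · rw [Matrix.single_apply_of_ne (h := h), Matrix.single_apply_of_ne (h := h),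
      mul_zero]

lemma stdBasisMatrix_mul_diagonal' (d : Fin n → F) (i j : Fin n) (a : F) :
    Matrix.single i j a * Matrix.diagonal d = Matrix.single i j (a * d j) := by
  ext k l
  rw [Matrix.mul_diagonal]
  by_cases h : i = k ∧ j = l
  · obtain ⟨rfl, rfl⟩ := h; simp [mul_comm]
  · rw [Matrix.single_apply_of_ne (h := h), Matrix.single_apply_of_ne (h := h),
      zero_mul]

lemma swapSq_mul_self {i j : Fin n} (hij : i ≠ j) (a : F) :
    swapSq i j a * swapSq i j a
      = Matrix.diagonal (fun k => if k = i ∨ k = j then a else 1) := by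
  unfold swapSq
  rw [add_mul, add_mul, mul_add, mul_add, mul_add, mul_add, mul_add, mul_add]
  rw [Matrix.diagonal_mul_diagonal, diagonal_mul_stdBasisMatrix, diagonal_mul_stdBasisMatrix,
    stdBasisMatrix_mul_diagonal', stdBasisMatrix_mul_diagonal',
    Matrix.single_mul_single_of_ne (h := hij.symm), Matrix.single_mul_single_of_ne (h := hij),
    Matrix.single_mul_single_same, Matrix.single_mul_single_same]
  rw [if_pos (Or.inl rfl : i = i ∨ i = j), if_pos (Or.inr rfl : j = i ∨ j = j)]
  simp only [zero_mul, mul_zero, Matrix.single_zero, add_zero, zero_add, one_mul, mul_one]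
  ext k l
  by_cases hk : k = l
  · subst hk
    by_cases h1 : k = i
    · subst h1
      simp [Matrix.diagonal_apply_eq, Matrix.single_apply_same,
        Matrix.single_apply_of_ne (h := (by tauto : ¬(j = k ∧ j = k))), hij]
    by_cases h2 : k = j
    · subst h2
      simp [Matrix.diagonal_apply_eq, Matrix.single_apply_same,
        Matrix.single_apply_of_ne (h := (by tauto : ¬(i = k ∧ i = k))), hij.symm, h1]
    · simp [Matrix.diagonal_apply_eq, h1, h2,
        Matrix.single_apply_of_ne (h := (by tauto : ¬(i = k ∧ i = k))),
        Matrix.single_apply_of_ne (h := (by tauto : ¬(j = k ∧ j = k)))]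
  · have h1 : ¬(i = k ∧ i = l) := by rintro ⟨rfl, rfl⟩; exact hk rfl
    have h2 : ¬(j = k ∧ j = l) := by rintro ⟨rfl, rfl⟩; exact hk rfl
    simp [Matrix.diagonal_apply_ne _ hk, Matrix.single_apply_of_ne (h := h1),
      Matrix.single_apply_of_ne (h := h2)]

-- product of a list of diagonal matrices
lemma list_prod_diagonal {α : Type*} (l : List α) (f : α → Fin n → F) :
    (l.map (fun i => Matrix.diagonal (f i))).prod
      = Matrix.diagonal (fun k => (l.map (fun i => f i k)).prod) := by
  induction l with
  | nil => simp
  | cons a l ih =>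
      simp only [List.map_cons, List.prod_cons, ih, Matrix.diagonal_mul_diagonal]

/-- main diagonal lemma -/
lemma diagonal_mem_closure_squares (hn : 2 ≤ n) (u : (Matrix (Fin n) (Fin n) F)ˣ)
    (d : Fin n → F) (hu : (u : Matrix (Fin n) (Fin n) F) = Matrix.diagonal d)
    (hsq : IsSquare (Matrix.det (u : Matrix (Fin n) (Fin n) F))) :
    u ∈ Subgroup.closure {g : (Matrix (Fin n) (Fin n) F)ˣ | IsSquare g} := by
  classical
  set Q := Subgroup.closure {g : (Matrix (Fin n) (Fin n) F)ˣ | IsSquare g} with hQ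
  have hdu : IsUnit (Matrix.diagonal d) := hu ▸ u.isUnit
  have hdet : IsUnit (Matrix.det (Matrix.diagonal d)) := (Matrix.isUnit_iff_isUnit_det _).mp hdu
  rw [Matrix.det_diagonal] at hdet
  have hd : ∀ k, d k ≠ 0 := by
    intro k
    have h0 : (∏ i, d i) ≠ 0 := hdet.ne_zero
    exact fun hk => h0 (Finset.prod_eq_zero (Finset.mem_univ k) hk)
  obtain ⟨s, hs⟩ := hsq
  rw [hu, Matrix.det_diagonal] at hs
  let i0 : Fin n := ⟨0, by omega⟩
  -- the diagonal correction factors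
  set δ : Fin n → (Fin n → F) := fun i k => if k = i0 ∨ k = i then (d i)⁻¹ else 1 with hδ
  -- units whose square is diagonal (δ i)
  have hXunit : ∀ i : Fin n, i ≠ i0 → IsUnit (swapSq i0 i (d i)⁻¹ : Matrix (Fin n) (Fin n) F) := by
    intro i hi
    have hsq2 : swapSq i0 i (d i)⁻¹ * swapSq i0 i (d i)⁻¹ = Matrix.diagonal (δ i) := by
      rw [swapSq_mul_self (Ne.symm hi)]
    have hδu : IsUnit (Matrix.diagonal (δ i)) := by
      rw [Matrix.isUnit_iff_isUnit_det, Matrix.det_diagonal]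
      apply IsUnit.mk0
      apply Finset.prod_ne_zero_iff.mpr
      intro k _
      simp only [hδ]
      split
      · exact inv_ne_zero (hd i)
      · exact one_ne_zero
    rw [Matrix.isUnit_iff_isUnit_det]
    have : IsUnit (Matrix.det (swapSq i0 i (d i)⁻¹) * Matrix.det (swapSq i0 i (d i)⁻¹)) := by
      rw [← Matrix.det_mul, hsq2]
      exact (Matrix.isUnit_iff_isUnit_det _).mp hδu
    exact isUnit_of_mul_isUnit_left this
  classical
  let w : Fin n → (Matrix (Fin n) (Fin n) F)ˣ := fun i =>
    if h : i ≠ i0 then (hXunit i h).unit else 1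
  have hwsq : ∀ i : Fin n, i ≠ i0 → (((w i) ^ 2 : (Matrix (Fin n) (Fin n) F)ˣ) : Matrix (Fin n) (Fin n) F) = Matrix.diagonal (δ i) := by
    intro i hi
    have : (w i : Matrix (Fin n) (Fin n) F) = swapSq i0 i (d i)⁻¹ := by
      simp only [w, dif_pos hi, IsUnit.unit_spec]
    rw [pow_two, Units.val_mul, this, swapSq_mul_self (Ne.symm hi)]
  set l : List (Fin n) := (Finset.univ.erase i0).toList with hl
  have hlmem : ∀ i ∈ l, i ≠ i0 := by
    intro i hi
    rw [hl, Finset.mem_toList, Finset.mem_erase] at hi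
    exact hi.1
  set P : (Matrix (Fin n) (Fin n) F)ˣ := (l.map (fun i => (w i) ^ 2)).prod with hP
  have hPQ : P ∈ Q := by
    apply Subgroup.list_prod_mem
    intro x hx
    rw [List.mem_map] at hx
    obtain ⟨i, _, rfl⟩ := hx
    exact Subgroup.subset_closure ⟨w i, by rw [pow_two]⟩
  have hPval : (P : Matrix (Fin n) (Fin n) F)
      = Matrix.diagonal (fun k => ∏ i ∈ Finset.univ.erase i0, δ i k) := by
    have h1 : (P : Matrix (Fin n) (Fin n) F)
        = ((l.map (fun i => (w i) ^ 2)).map (Units.val)).prod := by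
      rw [hP]
      exact Units.coeHom (Matrix (Fin n) (Fin n) F) |>.map_list_prod _
    rw [h1, List.map_map]
    have h2 : l.map (Units.val ∘ fun i => (w i) ^ 2) = l.map (fun i => Matrix.diagonal (δ i)) := by
      apply List.map_congr_left
      intro i hi
      exact hwsq i (hlmem i hi)
    rw [h2, list_prod_diagonal]
    apply congrArg
    funext k
    rw [← Finset.prod_map_toList]
  -- the total diagonal
  set pe : F := ∏ i ∈ Finset.univ.erase i0, d i with hpe
  have hpe0 : pe ≠ 0 := Finset.prod_ne_zero_iff.mpr (fun i _ => hd i)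
  have hs0 : s ≠ 0 := by
    intro h
    rw [h, mul_zero] at hs
    exact hdet.ne_zero hs
  set c : F := s * pe⁻¹ with hc
  have hc0 : c ≠ 0 := mul_ne_zero hs0 (inv_ne_zero hpe0)
  have hdpe : d i0 * pe = s * s := by
    rw [hpe, Finset.mul_prod_erase Finset.univ d (Finset.mem_univ i0)]
    exact hs
  have huP : (↑(u * P) : Matrix (Fin n) (Fin n) F)
      = Matrix.diagonal (fun k => if k = i0 then c * c else 1) := by
    rw [Units.val_mul, hu, hPval, Matrix.diagonal_mul_diagonal]
    apply congrArg
    funext k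
    by_cases hk : k = i0
    · rw [if_pos hk]
      have h3 : ∀ i ∈ Finset.univ.erase i0, δ i k = (d i)⁻¹ := by
        intro i _
        simp only [hδ]
        rw [if_pos (Or.inl hk)]
      rw [Finset.prod_congr rfl h3, Finset.prod_inv_distrib, ← hpe, hk]
      have hgoal : d i0 * pe⁻¹ = c * c := by
        rw [hc]
        rw [mul_mul_mul_comm, ← hdpe, mul_assoc, mul_inv_cancel_left₀ hpe0]
      exact hgoal
    · rw [if_neg hk]
      have h4 : ∏ i ∈ Finset.univ.erase i0, δ i k
          = δ k k := by
        apply Finset.prod_eq_single_of_mem k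
        · rw [Finset.mem_erase]; exact ⟨hk, Finset.mem_univ k⟩
        · intro b _ hb
          simp only [hδ]
          rw [if_neg]
          push_neg
          exact ⟨hk, Ne.symm hb⟩
      rw [h4]
      simp only [hδ, if_pos (Or.inr rfl)]
      exact mul_inv_cancel₀ (hd k)
  have hcu : IsUnit (Matrix.diagonal (fun k => if k = i0 then c else (1:F))) := by
    rw [Matrix.isUnit_iff_isUnit_det, Matrix.det_diagonal]
    apply IsUnit.mk0
    apply Finset.prod_ne_zero_iff.mpr
    intro k _
    split
    · exact hc0
    · exact one_ne_zero
  have huPsq : u * P = hcu.unit * hcu.unit := by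
    apply Units.ext
    rw [huP, Units.val_mul, IsUnit.unit_spec, Matrix.diagonal_mul_diagonal]
    apply congrArg
    funext k
    by_cases hk : k = i0 <;> simp [hk]
  have : u = (hcu.unit * hcu.unit) * P⁻¹ := by
    rw [← huPsq, mul_assoc, mul_inv_cancel, mul_one]
  rw [this]
  exact mul_mem (Subgroup.subset_closure ⟨hcu.unit, rfl⟩) (inv_mem hPQ)

lemma units_val_list_prod {M : Type*} [Monoid M] (l : List Mˣ) :
    ((l.prod : Mˣ) : M) = (l.map Units.val).prod := by
  induction l with
  | nil => rfl
  | cons a l ih => simp [ih]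

/-- transvection structures give units -/
def tUnit (t : Matrix.TransvectionStruct (Fin n) F) : (Matrix (Fin n) (Fin n) F)ˣ :=
  ⟨t.toMatrix, t.inv.toMatrix, t.mul_inv, t.inv_mul⟩

lemma tUnit_mem_closure_squares (h2 : (2 : F) ≠ 0) (t : Matrix.TransvectionStruct (Fin n) F) :
    tUnit t ∈ Subgroup.closure {g : (Matrix (Fin n) (Fin n) F)ˣ | IsSquare g} := by
  obtain ⟨i, j, hij, c⟩ := t
  haveI : NeZero (2 : F) := ⟨h2⟩
  set t' : Matrix.TransvectionStruct (Fin n) F := ⟨i, j, hij, c / 2⟩ with ht'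
  apply Subgroup.subset_closure
  refine ⟨tUnit t', ?_⟩
  apply Units.ext
  rw [Units.val_mul]
  show (⟨i, j, hij, c⟩ : Matrix.TransvectionStruct (Fin n) F).toMatrix = t'.toMatrix * t'.toMatrix
  rw [ht', Matrix.TransvectionStruct.toMatrix_mk, Matrix.TransvectionStruct.toMatrix_mk,
    Matrix.transvection_mul_transvection_same i j hij, add_halves]

lemma GL_mem_closure_squares (hn : 2 ≤ n) (h2 : (2 : F) ≠ 0)
    (u : (Matrix (Fin n) (Fin n) F)ˣ)
    (hsq : IsSquare (Matrix.det (u : Matrix (Fin n) (Fin n) F))) :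
    u ∈ Subgroup.closure {g : (Matrix (Fin n) (Fin n) F)ˣ | IsSquare g} := by
  classical
  set Q := Subgroup.closure {g : (Matrix (Fin n) (Fin n) F)ˣ | IsSquare g} with hQ
  obtain ⟨L, L', D, heq⟩ :=
    Matrix.Pivot.exists_list_transvec_mul_mul_list_transvec_eq_diagonal (u : Matrix (Fin n) (Fin n) F)
  set PL : (Matrix (Fin n) (Fin n) F)ˣ := (L.map tUnit).prod with hPL
  set PL' : (Matrix (Fin n) (Fin n) F)ˣ := (L'.map tUnit).prod with hPL'
  have hPLval : (PL : Matrix (Fin n) (Fin n) F) = (L.map Matrix.TransvectionStruct.toMatrix).prod := by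
    rw [hPL, units_val_list_prod, List.map_map]
    rfl
  have hPL'val : (PL' : Matrix (Fin n) (Fin n) F) = (L'.map Matrix.TransvectionStruct.toMatrix).prod := by
    rw [hPL', units_val_list_prod, List.map_map]
    rfl
  have hPLQ : PL ∈ Q := Subgroup.list_prod_mem _ (by
    intro x hx
    rw [List.mem_map] at hx
    obtain ⟨t, _, rfl⟩ := hx
    exact tUnit_mem_closure_squares h2 t)
  have hPL'Q : PL' ∈ Q := Subgroup.list_prod_mem _ (by
    intro x hx
    rw [List.mem_map] at hx
    obtain ⟨t, _, rfl⟩ := hx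
    exact tUnit_mem_closure_squares h2 t)
  set wu : (Matrix (Fin n) (Fin n) F)ˣ := PL * u * PL' with hwu
  have hwv : (wu : Matrix (Fin n) (Fin n) F) = Matrix.diagonal D := by
    rw [hwu, Units.val_mul, Units.val_mul, hPLval, hPL'val]
    exact heq
  have hwdet : IsSquare (Matrix.det (wu : Matrix (Fin n) (Fin n) F)) := by
    rw [hwu, Units.val_mul, Units.val_mul, Matrix.det_mul, Matrix.det_mul,
      hPLval, hPL'val, Matrix.TransvectionStruct.det_toMatrix_prod,
      Matrix.TransvectionStruct.det_toMatrix_prod, one_mul, mul_one]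
    exact hsq
  have hwQ : wu ∈ Q := diagonal_mem_closure_squares hn wu D hwv hwdet
  have : u = PL⁻¹ * wu * PL'⁻¹ := by
    rw [hwu]
    group
  rw [this]
  exact mul_mem (mul_mem (inv_mem hPLQ) hwQ) (inv_mem hPL'Q)

end AGLaux
end MatrixPart


section Main
open AGLaux

private theorem sq_range_index (F : Type*) [Field F] [Fintype F] (hodd : Odd (Fintype.card F)) :
    ((powMonoidHom 2 : Fˣ →* Fˣ).range).index = 2 := by
  classical
  have hchar : ringChar F ≠ 2 := by
    intro h
    have := FiniteField.even_card_of_char_two (F := F) h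
    rw [Nat.odd_iff] at hodd; omega
  have hne : (-1 : Fˣ) ≠ 1 := by
    intro h
    have := congrArg Units.val h
    push_cast at this
    exact Ring.neg_one_ne_one_of_char_ne_two hchar this
  have hker : (powMonoidHom 2 : Fˣ →* Fˣ).ker = Subgroup.zpowers (-1 : Fˣ) := by
    ext x
    simp only [MonoidHom.mem_ker, powMonoidHom_apply]
    constructor
    · intro hx
      have hx' : (x : F) ^ 2 = 1 := by
        have := congrArg Units.val hx; push_cast at this; exact this
      rcases sq_eq_one_iff.mp hx' with h | h
      · exact ⟨0, by ext; simp [h]⟩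
      · exact ⟨1, by ext; simp [h]⟩
    · rintro ⟨k, rfl⟩
      ext
      push_cast
      rw [← zpow_natCast, ← _root_.zpow_mul, mul_comm, _root_.zpow_mul]
      norm_num
  have hkcard : Nat.card (powMonoidHom 2 : Fˣ →* Fˣ).ker = 2 := by
    rw [hker, Nat.card_zpowers]
    exact orderOf_eq_prime (by simp) hne
  -- index of range = card of ker
  have h1 : Nat.card (powMonoidHom 2 : Fˣ →* Fˣ).range * ((powMonoidHom 2 : Fˣ →* Fˣ).range).index = Nat.card Fˣ :=
    Subgroup.card_mul_index _
  have h2 : Nat.card (powMonoidHom 2 : Fˣ →* Fˣ).ker * Nat.card (powMonoidHom 2 : Fˣ →* Fˣ).range = Nat.card Fˣ := by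
    rw [← Nat.card_congr (QuotientGroup.quotientKerEquivRange (powMonoidHom 2 : Fˣ →* Fˣ)).toEquiv]
    rw [mul_comm]
    exact (Subgroup.card_eq_card_quotient_mul_card_subgroup _).symm
  have hpos : 0 < Nat.card (powMonoidHom 2 : Fˣ →* Fˣ).range := Nat.card_pos
  rw [hkcard] at h2
  have := h1.trans h2.symm
  rw [mul_comm 2] at this
  exact Nat.eq_of_mul_eq_mul_left hpos (by linarith)


/-- For an odd prime power `q` and `n ≥ 2`, the affine group `AGL_n(q)` — the group of
invertible affine transformations of `F_q^n` — has exactly one subgroup of index 2. -/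
theorem AGL_unique_index_two_subgroup
    (F : Type*) [Field F] [Fintype F] (hodd : Odd (Fintype.card F))
    (n : ℕ) (hn : 2 ≤ n) :
    ∃! S : Subgroup ((Fin n → F) ≃ᵃ[F] (Fin n → F)), S.index = 2 := by
  classical
  have hchar : ringChar F ≠ 2 := by
    intro h
    have := FiniteField.even_card_of_char_two (F := F) h
    rw [Nat.odd_iff] at hodd
    omega
  have h2 : (2 : F) ≠ 0 := Ring.two_ne_zero hchar
  -- the squares subgroup of Fˣ and its index
  set Sq : Subgroup Fˣ := (powMonoidHom 2 : Fˣ →* Fˣ).range with hSq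
  have hSqidx : Sq.index = 2 := sq_range_index F hodd
  -- determinant homomorphism on the affine group
  set φ : ((Fin n → F) ≃ᵃ[F] (Fin n → F)) →* Fˣ :=
    (LinearEquiv.det).comp (AffineEquiv.linearHom) with hφ
  -- linear equivs into affine equivs, as a monoid hom
  set τ : ((Fin n → F) ≃ₗ[F] (Fin n → F)) →* ((Fin n → F) ≃ᵃ[F] (Fin n → F)) :=
    { toFun := LinearEquiv.toAffineEquiv
      map_one' := rfl
      map_mul' := fun e e' => rfl } with hτ
  -- matrices into linear equivs
  set ε : (Matrix.GeneralLinearGroup (Fin n) F) ≃* ((Fin n → F) ≃ₗ[F] (Fin n → F)) :=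
    (Matrix.GeneralLinearGroup.toLin).trans
      (LinearMap.GeneralLinearGroup.generalLinearEquiv F (Fin n → F)) with hε
  have hdetε : ∀ u : Matrix.GeneralLinearGroup (Fin n) F,
      LinearEquiv.det (ε u) = Matrix.GeneralLinearGroup.det u := by
    intro u
    apply Units.ext
    rw [LinearEquiv.coe_det]
    have h1 : ((ε u : (Fin n → F) ≃ₗ[F] (Fin n → F)) : (Fin n → F) →ₗ[F] (Fin n → F))
        = Matrix.mulVecLin (u : Matrix (Fin n) (Fin n) F) := rfl
    rw [h1, ← Matrix.toLin'_apply', LinearMap.det_toLin']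
    rfl
  have hφτ : ∀ e : (Fin n → F) ≃ₗ[F] (Fin n → F), φ (τ e) = LinearEquiv.det e := fun e => rfl
  have hφg : ∀ g : (Fin n → F) ≃ᵃ[F] (Fin n → F), φ g = LinearEquiv.det g.linear :=
    fun g => rfl
  -- surjectivity of φ
  have hφsurj : Function.Surjective φ := by
    intro v
    set i0 : Fin n := ⟨0, by omega⟩ with hi0
    set A : Matrix (Fin n) (Fin n) F :=
      Matrix.diagonal (fun k => if k = i0 then (v : F) else 1) with hA
    have hAdet : A.det = (v : F) := by
      rw [hA, Matrix.det_diagonal]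
      rw [Finset.prod_ite_eq' Finset.univ i0 (fun _ => (v : F))]
      simp
    have hAunit : IsUnit A.det := by rw [hAdet]; exact v.isUnit
    have hAu : IsUnit A := (Matrix.isUnit_iff_isUnit_det A).mpr hAunit
    refine ⟨τ (ε hAu.unit), ?_⟩
    rw [hφτ, hdetε]
    apply Units.ext
    show Matrix.det ((hAu.unit : Matrix (Fin n) (Fin n) F)) = (v : F)
    rw [IsUnit.unit_spec, hAdet]
  -- the candidate subgroup
  set S : Subgroup ((Fin n → F) ≃ᵃ[F] (Fin n → F)) := Sq.comap φ with hS
  have hSidx : S.index = 2 := by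
    rw [hS, Subgroup.index_comap_of_surjective _ hφsurj, hSqidx]
  -- every element of S is a product of squares
  have hSQ : ∀ g ∈ S, g ∈ Subgroup.closure
      {y : (Fin n → F) ≃ᵃ[F] (Fin n → F) | IsSquare y} := by
    intro g hg
    rw [hS, Subgroup.mem_comap] at hg
    obtain ⟨r, hr⟩ := hg
    -- decompose g as translation * linear part
    have hdecomp : g = (AffineEquiv.constVAdd F (Fin n → F) (g 0)) * (τ g.linear) := by
      apply AffineEquiv.ext
      intro x
      rw [AffineEquiv.coe_mul]
      simp only [Function.comp_apply]
      have h5 : g x = g.linear x +ᵥ g 0 := by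
        have h6 := g.map_vadd (0 : Fin n → F) x
        rw [vadd_eq_add, add_zero] at h6
        exact h6
      rw [h5]
      show g.linear x + g 0 = g 0 + g.linear x
      exact add_comm _ _
    -- the translation is a square
    have htrans : (AffineEquiv.constVAdd F (Fin n → F) (g 0)) ∈ Subgroup.closure
        {y : (Fin n → F) ≃ᵃ[F] (Fin n → F) | IsSquare y} := by
      apply Subgroup.subset_closure
      refine ⟨AffineEquiv.constVAdd F (Fin n → F) ((2 : F)⁻¹ • (g 0)), ?_⟩
      have hhalf : (2 : F)⁻¹ • (g 0) + (2 : F)⁻¹ • (g 0) = g 0 := by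
        rw [← add_smul]
        have : (2 : F)⁻¹ + (2 : F)⁻¹ = 1 := by
          field_simp
          ring
        rw [this, one_smul]
      rw [AffineEquiv.mul_def, ← AffineEquiv.constVAdd_add, hhalf]
    -- the linear part is a product of squares
    have hlin : (τ g.linear) ∈ Subgroup.closure
        {y : (Fin n → F) ≃ᵃ[F] (Fin n → F) | IsSquare y} := by
      set gl : Matrix.GeneralLinearGroup (Fin n) F := ε.symm g.linear with hgl
      have hεgl : ε gl = g.linear := by rw [hgl, MulEquiv.apply_symm_apply]
      have hsq : IsSquare (Matrix.det ((gl : Matrix.GeneralLinearGroup (Fin n) F) :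
          Matrix (Fin n) (Fin n) F)) := by
        have h3 : Matrix.GeneralLinearGroup.det gl = LinearEquiv.det g.linear := by
          rw [← hdetε, hεgl]
        have h4 : Matrix.det ((gl : Matrix.GeneralLinearGroup (Fin n) F) :
            Matrix (Fin n) (Fin n) F) = ((LinearEquiv.det g.linear : Fˣ) : F) := by
          rw [← h3]
          rfl
        rw [h4, ← hφg, ← hr]
        exact ⟨(r : F), by rw [powMonoidHom_apply]; push_cast; ring⟩
      have hmem := GL_mem_closure_squares hn h2 gl hsq
      have := AGLaux.map_mem_closure_squares (τ.comp ε.toMonoidHom) hmem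
      simp only [MonoidHom.comp_apply, MulEquiv.coe_toMonoidHom] at this
      rw [hεgl] at this
      exact this
    rw [hdecomp]
    exact mul_mem htrans hlin
  refine ⟨S, hSidx, ?_⟩
  intro T hT
  have hST : S ≤ T := by
    intro g hg
    have hQT : Subgroup.closure {y : (Fin n → F) ≃ᵃ[F] (Fin n → F) | IsSquare y} ≤ T := by
      rw [Subgroup.closure_le]
      rintro y ⟨z, rfl⟩
      exact Subgroup.mul_self_mem_of_index_two hT z
    exact hQT (hSQ g hg)
  have h1 : S.relIndex T * T.index = S.index := Subgroup.relIndex_mul_index hST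
  rw [hT, hSidx] at h1
  have h2' : S.relIndex T = 1 := by omega
  have hTS : T ≤ S := Subgroup.relIndex_eq_one.mp h2'
  exact le_antisymm hTS hST

end Main
end
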